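/- arXiv:2409.07974 — 7 statements merged into one kernel-verified Lean document; each statement's English description precedes it below -/
import Mathlib

section
/- With the notation of the previous setup (R commutative, n ≥ 2, m₁, m₂ coprime to n, r = ⌈m₁m₂/n⌉, s = ⌊m₁m₂/n⌋, m₃ = m₁m₂ − n·s, and a₃, b₃ defined as a₃ = r·a₁a₂ + (m₁−r)·a₁b₂ + (m₂−r)·b₁a₂ + (n−m₁−m₂+r)·b₁b₂, b₃ = s·a₁a₂ + (m₁−s)·a₁b₂ + (m₂−s)·b₁a₂ + (n−m₁−m₂+s)·b₁b₂), one has m₃·a₃ + (n−m₃)·b₃ = (m₁a₁ + (n−m₁)b₁)·(m₂a₂ + (n−m₂)b₂) in R. -/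
theorem christoffel_sigma_mul (R : Type*) [CommRing R] (n m₁ m₂ : ℕ) (hn : 2 ≤ n)
    (h₁ : 1 ≤ m₁) (h₁' : m₁ < n) (h₂ : 1 ≤ m₂) (h₂' : m₂ < n)
    (hc₁ : Nat.Coprime m₁ n) (hc₂ : Nat.Coprime m₂ n)
    (a₁ b₁ a₂ b₂ : R)
    (r s m₃ : ℤ) (hr : r = ⌈(m₁ * m₂ : ℚ) / n⌉) (hs : s = ⌊(m₁ * m₂ : ℚ) / n⌋)
    (hm₃ : m₃ = (m₁ : ℤ) * m₂ - n * s)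
    (a₃ b₃ : R)
    (ha₃ : a₃ = (r : R) * (a₁ * a₂) + ((m₁ : R) - r) * (a₁ * b₂) +
      ((m₂ : R) - r) * (b₁ * a₂) + ((n : R) - (m₁ : R) - (m₂ : R) + r) * (b₁ * b₂))
    (hb₃ : b₃ = (s : R) * (a₁ * a₂) + ((m₁ : R) - s) * (a₁ * b₂) +
      ((m₂ : R) - s) * (b₁ * a₂) + ((n : R) - (m₁ : R) - (m₂ : R) + s) * (b₁ * b₂)) :
    (m₃ : R) * a₃ + ((n : R) - (m₃ : R)) * b₃ =
      ((m₁ : R) * a₁ + ((n : R) - (m₁ : R)) * b₁) *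
        ((m₂ : R) * a₂ + ((n : R) - (m₂ : R)) * b₂) := by
  have hn0 : (n : ℚ) ≠ 0 := by positivity
  have hndvd : ¬ (n : ℤ) ∣ (m₁ : ℤ) * m₂ := by
    have hco : Nat.Coprime n (m₁ * m₂) := (hc₁.mul hc₂).symm
    intro h
    have h' : n ∣ m₁ * m₂ := by exact_mod_cast (by push_cast at h ⊢; exact_mod_cast h : (n:ℤ) ∣ ((m₁*m₂ : ℕ) : ℤ))
    have := hco.eq_one_of_dvd h'
    omega
  have hne : ((m₁ * m₂ : ℚ)) / n ≠ (s : ℚ) := by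
    intro h
    apply hndvd
    refine ⟨s, ?_⟩
    have h2 : (m₁ * m₂ : ℚ) = n * s := by rw [(div_eq_iff hn0).mp h]; ring
    exact_mod_cast h2
  have hlt : (s : ℚ) < (m₁ * m₂ : ℚ) / n := by
    rcases lt_or_eq_of_le (hs ▸ Int.floor_le ((m₁ * m₂ : ℚ) / n)) with h | h
    · exact h
    · exact absurd h.symm hne
  have hrs : r = s + 1 := by
    have h1 : r ≤ s + 1 := by rw [hr, hs]; exact Int.ceil_le_floor_add_one _
    have h2 : s < r := by rw [hr]; exact Int.lt_ceil.mpr hlt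
    omega
  have key : ((m₁ : ℤ) * m₂ : R) = ((m₁ : ℤ) * m₂ : ℤ) • (1 : R) := by simp
  subst ha₃ hb₃ hm₃
  rw [hrs]
  push_cast
  ring
end

section
/- Let R be an integral domain, n ≥ 2, and let A, B be n×n Christoffel matrices over R of types m₁ and m₂ respectively (with entries a₁ ≠ b₁ and a₂ ≠ b₂). Then AB = BA. -/
/-- The `n × n` Christoffel matrix `C_m(a,b)`: column `1` consists of `m` consecutive
`a`'s followed by `n - m` consecutive `b`'s, and each subsequent column is the
downward cyclic shift by `m` of the preceding column. -/
def christoffel (n m : ℕ) {R : Type*} (a b : R) : Matrix (Fin n) (Fin n) R :=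
  Matrix.of fun i j =>
    if (((i : ℕ) : ZMod n) - (m : ZMod n) * ((j : ℕ) : ZMod n)).val < m then a else b

open Finset

section Aux

variable {R : Type*} [CommRing R]

private lemma zmod_indicator {n m : ℕ} [NeZero n] (hm : m ≤ n) (y : ZMod n) :
    (∑ s ∈ range m, if (s : ZMod n) = y then (1 : R) else 0)
      = if y.val < m then 1 else 0 := by
  have h : ∀ s ∈ range m, ((s : ZMod n) = y ↔ y.val = s) := by
    intro s hs
    rw [mem_range] at hs
    constructor
    · intro h; rw [← h, ZMod.val_cast_of_lt (lt_of_lt_of_le hs hm)]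
    · intro h; rw [← h, ZMod.natCast_zmod_val]
  rw [Finset.sum_congr rfl fun s hs => if_congr (h s hs) rfl rfl, Finset.sum_ite_eq]
  simp

private lemma sum_zmod_restrict {n m : ℕ} [NeZero n] (hm : m ≤ n) (f : ZMod n → R) :
    (∑ k : ZMod n, if k.val < m then f k else 0) = ∑ t ∈ range m, f (t : ZMod n) := by
  have h1 : ∀ k : ZMod n, (if k.val < m then f k else 0)
      = ∑ t ∈ range m, if ((t : ℕ) : ZMod n) = k then f k else 0 := by
    intro k
    calc (if k.val < m then f k else 0)
        = (if k.val < m then (1 : R) else 0) * f k := by split <;> simp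
      _ = (∑ t ∈ range m, if ((t : ℕ) : ZMod n) = k then (1 : R) else 0) * f k := by
            rw [zmod_indicator hm]
      _ = ∑ t ∈ range m, if ((t : ℕ) : ZMod n) = k then f k else 0 := by
            rw [Finset.sum_mul]
            exact Finset.sum_congr rfl fun t _ => by split <;> simp
  rw [Finset.sum_congr rfl fun k _ => h1 k, Finset.sum_comm]
  exact Finset.sum_congr rfl fun t _ => by rw [Finset.sum_ite_eq]; simp

private lemma sum_indicator_card {n m : ℕ} [NeZero n] (hm : m ≤ n) :
    (∑ k : ZMod n, if k.val < m then (1 : R) else 0) = (m : R) := by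
  rw [sum_zmod_restrict hm fun _ => (1 : R)]
  simp

private lemma sum_shift_unit {n : ℕ} [NeZero n] {c : ZMod n} (hc : IsUnit c) (x : ZMod n)
    (g : ZMod n → R) : ∑ k : ZMod n, g (x - c * k) = ∑ k : ZMod n, g k := by
  refine Fintype.sum_bijective (fun k : ZMod n => x - c * k) ?_ _ _ fun k => rfl
  refine Finite.injective_iff_bijective.1 fun k l h => ?_
  exact hc.mul_left_cancel (sub_right_injective h)

private lemma sum_range_mul_eq (a b : ℕ) (f : ℕ → R) :
    ∑ u ∈ range (a * b), f u = ∑ t ∈ range b, ∑ s ∈ range a, f (a * t + s) := by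
  rcases Nat.eq_zero_or_pos a with ha | ha
  · subst ha; simp
  rw [← Finset.sum_product']
  refine Finset.sum_nbij' (fun u => (u / a, u % a)) (fun p => a * p.1 + p.2) ?_ ?_ ?_ ?_ ?_
  · intro u hu
    rw [mem_range] at hu
    simp only [Finset.mem_product, mem_range]
    exact ⟨(Nat.div_lt_iff_lt_mul ha).2 (by rwa [mul_comm] at hu), Nat.mod_lt _ ha⟩
  · intro p hp
    simp only [Finset.mem_product, mem_range] at hp
    rw [mem_range]
    calc a * p.1 + p.2 < a * p.1 + a := by omega
      _ = a * (p.1 + 1) := by ring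
      _ ≤ a * b := Nat.mul_le_mul_left a hp.1
  · intro u _
    exact Nat.div_add_mod u a
  · intro p hp
    simp only [Finset.mem_product, mem_range] at hp
    ext
    · simp only [Nat.mul_add_div ha, Nat.div_eq_of_lt hp.2, add_zero]
    · simp only [Nat.mul_add_mod, Nat.mod_eq_of_lt hp.2]
  · intro u _
    rw [Nat.div_add_mod u a]

private lemma cross {n m₁ m₂ : ℕ} [NeZero n] (h₁' : m₁ ≤ n) (h₂' : m₂ ≤ n) (x : ZMod n) :
    (∑ k : ZMod n, (if (x - (m₁ : ZMod n) * k).val < m₁ then (1 : R) else 0) *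
        (if k.val < m₂ then (1 : R) else 0))
      = ∑ u ∈ range (m₁ * m₂), if ((u : ℕ) : ZMod n) = x then (1 : R) else 0 := by
  have step1 : ∀ k : ZMod n,
      (if (x - (m₁ : ZMod n) * k).val < m₁ then (1 : R) else 0) *
        (if k.val < m₂ then (1 : R) else 0)
      = if k.val < m₂ then (if (x - (m₁ : ZMod n) * k).val < m₁ then (1 : R) else 0) else 0 := by
    intro k; split_ifs <;> ring
  rw [Finset.sum_congr rfl fun k _ => step1 k,
    sum_zmod_restrict h₂' fun k => (if (x - (m₁ : ZMod n) * k).val < m₁ then (1 : R) else 0),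
    sum_range_mul_eq m₁ m₂ fun u => if ((u : ℕ) : ZMod n) = x then (1 : R) else 0]
  refine Finset.sum_congr rfl fun t _ => ?_
  rw [← zmod_indicator h₁' (x - (m₁ : ZMod n) * (t : ZMod n))]
  refine Finset.sum_congr rfl fun s _ => ?_
  have hiff : ((s : ZMod n) = x - (m₁ : ZMod n) * (t : ZMod n))
      ↔ (((m₁ * t + s : ℕ) : ZMod n) = x) := by
    push_cast
    rw [eq_sub_iff_add_eq, add_comm]
  exact if_congr hiff rfl rfl

private lemma side {n m₁ m₂ : ℕ} [NeZero n] (h₁' : m₁ ≤ n) (h₂' : m₂ ≤ n)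
    (hu₁ : IsUnit ((m₁ : ZMod n))) (a₁ b₁ a₂ b₂ : R) (x : ZMod n) :
    (∑ k : ZMod n, (if (x - (m₁ : ZMod n) * k).val < m₁ then a₁ else b₁) *
        (if k.val < m₂ then a₂ else b₂))
      = (n : R) * (b₁ * b₂) + (m₂ : R) * (b₁ * (a₂ - b₂)) + (m₁ : R) * ((a₁ - b₁) * b₂)
        + (a₁ - b₁) * (a₂ - b₂) *
          ∑ u ∈ range (m₁ * m₂), (if ((u : ℕ) : ZMod n) = x then (1 : R) else 0) := by
  have expand : ∀ k : ZMod n,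
      (if (x - (m₁ : ZMod n) * k).val < m₁ then a₁ else b₁) *
        (if k.val < m₂ then a₂ else b₂)
      = b₁ * b₂ + b₁ * (a₂ - b₂) * (if k.val < m₂ then (1 : R) else 0)
        + (a₁ - b₁) * b₂ * (if (x - (m₁ : ZMod n) * k).val < m₁ then (1 : R) else 0)
        + (a₁ - b₁) * (a₂ - b₂) *
            ((if (x - (m₁ : ZMod n) * k).val < m₁ then (1 : R) else 0) *
              (if k.val < m₂ then (1 : R) else 0)) := by
    intro k; split_ifs <;> ring
  rw [Finset.sum_congr rfl fun k _ => expand k, Finset.sum_add_distrib, Finset.sum_add_distrib,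
    Finset.sum_add_distrib]
  have S0 : (∑ _k : ZMod n, b₁ * b₂) = (n : R) * (b₁ * b₂) := by
    rw [Finset.sum_const, Finset.card_univ, ZMod.card, nsmul_eq_mul]
  have S1 : (∑ k : ZMod n, b₁ * (a₂ - b₂) * (if k.val < m₂ then (1 : R) else 0))
      = (m₂ : R) * (b₁ * (a₂ - b₂)) := by
    rw [← Finset.mul_sum, sum_indicator_card h₂']; ring
  have T : (∑ k : ZMod n, if (x - (m₁ : ZMod n) * k).val < m₁ then (1 : R) else 0)
      = (m₁ : R) := by
    have h := sum_shift_unit hu₁ x (fun y : ZMod n => if y.val < m₁ then (1 : R) else 0)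
    simpa using h.trans (sum_indicator_card h₁')
  have S2 : (∑ k : ZMod n, (a₁ - b₁) * b₂ *
      (if (x - (m₁ : ZMod n) * k).val < m₁ then (1 : R) else 0))
      = (m₁ : R) * ((a₁ - b₁) * b₂) := by
    rw [← Finset.mul_sum, T]; ring
  have S3 : (∑ k : ZMod n, (a₁ - b₁) * (a₂ - b₂) *
      ((if (x - (m₁ : ZMod n) * k).val < m₁ then (1 : R) else 0) *
        (if k.val < m₂ then (1 : R) else 0)))
      = (a₁ - b₁) * (a₂ - b₂) *
          ∑ u ∈ range (m₁ * m₂), (if ((u : ℕ) : ZMod n) = x then (1 : R) else 0) := by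
    rw [← Finset.mul_sum, cross h₁' h₂' x]
  rw [S0, S1, S2, S3]

private lemma key {n m₁ m₂ : ℕ} [NeZero n] (h₁' : m₁ ≤ n) (h₂' : m₂ ≤ n)
    (hu₁ : IsUnit ((m₁ : ZMod n))) (hu₂ : IsUnit ((m₂ : ZMod n)))
    (a₁ b₁ a₂ b₂ : R) (x : ZMod n) :
    (∑ k : ZMod n, (if (x - (m₁ : ZMod n) * k).val < m₁ then a₁ else b₁) *
        (if k.val < m₂ then a₂ else b₂))
      = ∑ k : ZMod n, (if (x - (m₂ : ZMod n) * k).val < m₂ then a₂ else b₂) *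
        (if k.val < m₁ then a₁ else b₁) := by
  rw [side h₁' h₂' hu₁ a₁ b₁ a₂ b₂ x, side h₂' h₁' hu₂ a₂ b₂ a₁ b₁ x, Nat.mul_comm m₂ m₁]
  ring

end Aux

theorem christoffel_mul_comm (R : Type*) [CommRing R] [IsDomain R] (n m₁ m₂ : ℕ)
    (hn : 2 ≤ n) (h₁ : 1 ≤ m₁) (h₁' : m₁ < n) (h₂ : 1 ≤ m₂) (h₂' : m₂ < n)
    (hc₁ : Nat.Coprime m₁ n) (hc₂ : Nat.Coprime m₂ n)
    (a₁ b₁ a₂ b₂ : R) (hab₁ : a₁ ≠ b₁) (hab₂ : a₂ ≠ b₂) :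
    christoffel n m₁ a₁ b₁ * christoffel n m₂ a₂ b₂ =
      christoffel n m₂ a₂ b₂ * christoffel n m₁ a₁ b₁ := by
  have : NeZero n := ⟨by omega⟩
  have hu₁ : IsUnit ((m₁ : ZMod n)) := (ZMod.isUnit_iff_coprime m₁ n).2 hc₁
  have hu₂ : IsUnit ((m₂ : ZMod n)) := (ZMod.isUnit_iff_coprime m₂ n).2 hc₂
  have hbij : Function.Bijective (fun k : Fin n => ((k : ℕ) : ZMod n)) := by
    rw [Fintype.bijective_iff_injective_and_card]
    refine ⟨fun k l h => ?_, by simp [ZMod.card]⟩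
    apply Fin.ext
    have := congrArg ZMod.val h
    rwa [ZMod.val_cast_of_lt k.isLt, ZMod.val_cast_of_lt l.isLt] at this
  ext i j
  simp only [Matrix.mul_apply, christoffel, Matrix.of_apply]
  set xi := ((i : ℕ) : ZMod n) with hxi
  set xj := ((j : ℕ) : ZMod n) with hxj
  set x := xi - (m₁ : ZMod n) * ((m₂ : ZMod n) * xj) with hx
  clear_value x xi xj
  calc (∑ k : Fin n, (if (xi - (m₁ : ZMod n) * ((k : ℕ) : ZMod n)).val < m₁ then a₁ else b₁) *
          (if (((k : ℕ) : ZMod n) - (m₂ : ZMod n) * xj).val < m₂ then a₂ else b₂))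
      = ∑ k : ZMod n, (if (xi - (m₁ : ZMod n) * k).val < m₁ then a₁ else b₁) *
          (if (k - (m₂ : ZMod n) * xj).val < m₂ then a₂ else b₂) :=
        Fintype.sum_bijective _ hbij _ _ fun k => rfl
    _ = ∑ k : ZMod n, (if (x - (m₁ : ZMod n) * k).val < m₁ then a₁ else b₁) *
          (if k.val < m₂ then a₂ else b₂) :=
        (Fintype.sum_equiv (Equiv.addRight ((m₂ : ZMod n) * xj))
          (fun k => (if (x - (m₁ : ZMod n) * k).val < m₁ then a₁ else b₁) *
            (if k.val < m₂ then a₂ else b₂))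
          (fun k => (if (xi - (m₁ : ZMod n) * k).val < m₁ then a₁ else b₁) *
            (if (k - (m₂ : ZMod n) * xj).val < m₂ then a₂ else b₂))
          (fun k => by
            simp only [Equiv.coe_addRight,
              show xi - (m₁ : ZMod n) * (k + (m₂ : ZMod n) * xj) = x - (m₁ : ZMod n) * k
                from by rw [hx]; ring,
              show k + (m₂ : ZMod n) * xj - (m₂ : ZMod n) * xj = k from by ring])).symm
    _ = ∑ k : ZMod n, (if (x - (m₂ : ZMod n) * k).val < m₂ then a₂ else b₂) *
          (if k.val < m₁ then a₁ else b₁) :=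
        key h₁'.le h₂'.le hu₁ hu₂ a₁ b₁ a₂ b₂ x
    _ = ∑ k : ZMod n, (if (xi - (m₂ : ZMod n) * k).val < m₂ then a₂ else b₂) *
          (if (k - (m₁ : ZMod n) * xj).val < m₁ then a₁ else b₁) :=
        Fintype.sum_equiv (Equiv.addRight ((m₁ : ZMod n) * xj))
          (fun k => (if (x - (m₂ : ZMod n) * k).val < m₂ then a₂ else b₂) *
            (if k.val < m₁ then a₁ else b₁))
          (fun k => (if (xi - (m₂ : ZMod n) * k).val < m₂ then a₂ else b₂) *
            (if (k - (m₁ : ZMod n) * xj).val < m₁ then a₁ else b₁))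
          (fun k => by
            simp only [Equiv.coe_addRight,
              show xi - (m₂ : ZMod n) * (k + (m₁ : ZMod n) * xj) = x - (m₂ : ZMod n) * k
                from by rw [hx]; ring,
              show k + (m₁ : ZMod n) * xj - (m₁ : ZMod n) * xj = k from by ring])
    _ = ∑ k : Fin n, (if (xi - (m₂ : ZMod n) * ((k : ℕ) : ZMod n)).val < m₂ then a₂ else b₂) *
          (if (((k : ℕ) : ZMod n) - (m₁ : ZMod n) * xj).val < m₁ then a₁ else b₁) :=
        (Fintype.sum_bijective _ hbij _ _ fun k => rfl).symm
end

section
/- Let R be an integral domain, n ≥ 2, and let A = C_{m₁}(a₁,b₁), B = C_{m₂}(a₂,b₂) be n×n Christoffel matrices over R. Then AB is again a Christoffel matrix over R, of type m₃ = m₁m₂ mod n, with diagonal-word parameters a₃ = r a₁a₂ + (m₁−r) a₁b₂ + (m₂−r) b₁a₂ + (n−m₁−m₂+r) b₁b₂ and b₃ = s a₁a₂ + (m₁−s) a₁b₂ + (m₂−s) b₁a₂ + (n−m₁−m₂+s) b₁b₂, where r = ⌈m₁m₂/n⌉ and s = ⌊m₁m₂/n⌋; moreover a₃ ≠ b₃.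 -/
section ChrAux

variable {n : ℕ} [NeZero n]

private lemma chr_card_equiv (e : ZMod n ≃ ZMod n) (p : ZMod n → Prop) [DecidablePred p] :
    (Finset.univ.filter fun u : ZMod n => p (e u)).card = (Finset.univ.filter p).card := by
  refine Finset.card_bij' (fun u _ => e u) (fun w _ => e.symm w) ?_ ?_ ?_ ?_
  · intro a ha
    rw [Finset.mem_filter] at ha ⊢
    exact ⟨Finset.mem_univ _, ha.2⟩
  · intro a ha
    rw [Finset.mem_filter] at ha ⊢
    refine ⟨Finset.mem_univ _, ?_⟩
    rw [e.apply_symm_apply]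
    exact ha.2
  · intro a _
    exact e.symm_apply_apply a
  · intro a _
    exact e.apply_symm_apply a

private lemma chr_card_lt {m : ℕ} (hm : m ≤ n) :
    (Finset.univ.filter fun w : ZMod n => w.val < m).card = m := by
  have himg : (Finset.univ.filter fun w : ZMod n => w.val < m)
      = (Finset.range m).image (Nat.cast : ℕ → ZMod n) := by
    ext w
    simp only [Finset.mem_filter, Finset.mem_univ, true_and, Finset.mem_image, Finset.mem_range]
    constructor
    · intro h
      exact ⟨w.val, h, ZMod.natCast_rightInverse w⟩
    · rintro ⟨c, hc, rfl⟩
      rwa [ZMod.val_cast_of_lt (lt_of_lt_of_le hc hm)]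
  rw [himg, Finset.card_image_of_injOn, Finset.card_range]
  intro c hc d hd hcd
  simp only [Finset.coe_range, Set.mem_Iio] at hc hd
  have h := congrArg ZMod.val hcd
  rwa [ZMod.val_cast_of_lt (lt_of_lt_of_le hc hm),
    ZMod.val_cast_of_lt (lt_of_lt_of_le hd hm)] at h

private lemma chr_count (m₁ m₂ : ℕ) (h₁0 : 0 < m₁) (h₁ : m₁ < n) (h₂ : m₂ < n) (v : ZMod n) :
    (Finset.univ.filter fun u : ZMod n =>
        u.val < m₂ ∧ (v - (m₁ : ZMod n) * u).val < m₁).card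
      = if v.val < (m₁ * m₂) % n then m₁ * m₂ / n + 1 else m₁ * m₂ / n := by
  have hn : 0 < n := Nat.pos_of_ne_zero (NeZero.ne n)
  have hval : ∀ w : ZMod n, ((w.val : ℕ) : ZMod n) = w := fun w => ZMod.natCast_rightInverse w
  -- Step 1 : bijection with the integers `x < m₁ * m₂` congruent to `v` mod `n`.
  have step1 : (Finset.univ.filter fun u : ZMod n =>
        u.val < m₂ ∧ (v - (m₁ : ZMod n) * u).val < m₁).card
      = ((Finset.range (m₁ * m₂)).filter fun x => ((x : ℕ) : ZMod n) = v).card := by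
    refine Finset.card_bij' (fun u _ => m₁ * u.val + (v - (m₁ : ZMod n) * u).val)
      (fun x _ => ((x / m₁ : ℕ) : ZMod n)) ?_ ?_ ?_ ?_
    · intro u hu
      simp only [Finset.mem_filter, Finset.mem_univ, true_and] at hu
      obtain ⟨hu2, hu1⟩ := hu
      simp only [Finset.mem_filter, Finset.mem_range]
      constructor
      · have h5 : m₁ * (u.val + 1) ≤ m₁ * m₂ := Nat.mul_le_mul_left m₁ hu2
        rw [Nat.mul_succ] at h5
        omega
      · rw [Nat.cast_add, Nat.cast_mul, hval, hval]
        ring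
    · intro x hx
      simp only [Finset.mem_filter, Finset.mem_range] at hx
      obtain ⟨hx1, hx2⟩ := hx
      have hq : x / m₁ < m₂ := Nat.div_lt_of_lt_mul hx1
      have hqv : ((x / m₁ : ℕ) : ZMod n).val = x / m₁ := ZMod.val_cast_of_lt (hq.trans h₂)
      have hrw : v - (m₁ : ZMod n) * ((x / m₁ : ℕ) : ZMod n) = ((x % m₁ : ℕ) : ZMod n) := by
        have h2 : ((m₁ * (x / m₁) + x % m₁ : ℕ) : ZMod n) = ((x : ℕ) : ZMod n) := by
          rw [Nat.div_add_mod]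
        rw [Nat.cast_add, Nat.cast_mul] at h2
        rw [← hx2, ← h2]; ring
      simp only [Finset.mem_filter, Finset.mem_univ, true_and]
      refine ⟨by rw [hqv]; exact hq, ?_⟩
      rw [hrw, ZMod.val_cast_of_lt ((Nat.mod_lt x h₁0).trans h₁)]
      exact Nat.mod_lt x h₁0
    · intro u hu
      simp only [Finset.mem_filter, Finset.mem_univ, true_and] at hu
      obtain ⟨hu2, hu1⟩ := hu
      have hdiv : (m₁ * u.val + (v - (m₁ : ZMod n) * u).val) / m₁ = u.val := by
        rw [Nat.add_comm, Nat.mul_comm, Nat.add_mul_div_right _ _ h₁0,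
          Nat.div_eq_of_lt hu1, Nat.zero_add]
      show (((m₁ * u.val + (v - (m₁ : ZMod n) * u).val) / m₁ : ℕ) : ZMod n) = u
      rw [hdiv]
      exact hval u
    · intro x hx
      simp only [Finset.mem_filter, Finset.mem_range] at hx
      obtain ⟨hx1, hx2⟩ := hx
      have hq : x / m₁ < m₂ := Nat.div_lt_of_lt_mul hx1
      have hqv : ((x / m₁ : ℕ) : ZMod n).val = x / m₁ := ZMod.val_cast_of_lt (hq.trans h₂)
      have hrw : v - (m₁ : ZMod n) * ((x / m₁ : ℕ) : ZMod n) = ((x % m₁ : ℕ) : ZMod n) := by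
        have h2 : ((m₁ * (x / m₁) + x % m₁ : ℕ) : ZMod n) = ((x : ℕ) : ZMod n) := by
          rw [Nat.div_add_mod]
        rw [Nat.cast_add, Nat.cast_mul] at h2
        rw [← hx2, ← h2]; ring
      show m₁ * (((x / m₁ : ℕ) : ZMod n)).val
          + (v - (m₁ : ZMod n) * ((x / m₁ : ℕ) : ZMod n)).val = x
      rw [hqv, hrw, ZMod.val_cast_of_lt ((Nat.mod_lt x h₁0).trans h₁)]
      exact Nat.div_add_mod x m₁
  -- Step 2 : counting that congruence class.
  have hdm : n * (m₁ * m₂ / n) + (m₁ * m₂) % n = m₁ * m₂ := Nat.div_add_mod _ n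
  have hrrn : (m₁ * m₂) % n < n := Nat.mod_lt _ hn
  have hvn : v.val < n := ZMod.val_lt v
  have himg : ((Finset.range (m₁ * m₂)).filter fun x => ((x : ℕ) : ZMod n) = v)
      = (Finset.range (if v.val < (m₁ * m₂) % n then m₁ * m₂ / n + 1 else m₁ * m₂ / n)).image
        (fun q => v.val + n * q) := by
    ext x
    simp only [Finset.mem_filter, Finset.mem_range, Finset.mem_image]
    constructor
    · rintro ⟨hx1, hx2⟩
      have hxm : x % n = v.val := by
        have h := congrArg ZMod.val hx2
        rwa [ZMod.val_natCast] at h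
      have hd := Nat.div_add_mod x n
      refine ⟨x / n, ?_, by omega⟩
      by_cases hvc : v.val < (m₁ * m₂) % n
      · rw [if_pos hvc]
        by_contra hcon
        push_neg at hcon
        have h3 := Nat.mul_le_mul_left n hcon
        rw [Nat.mul_succ] at h3
        omega
      · rw [if_neg hvc]
        by_contra hcon
        push_neg at hcon
        have h3 := Nat.mul_le_mul_left n hcon
        omega
    · rintro ⟨q, hq, rfl⟩
      refine ⟨?_, by
        rw [Nat.cast_add, Nat.cast_mul, ZMod.natCast_self, zero_mul, add_zero, hval]⟩
      by_cases hvc : v.val < (m₁ * m₂) % n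
      · rw [if_pos hvc] at hq
        have h3 := Nat.mul_le_mul_left n (Nat.lt_succ_iff.mp hq)
        omega
      · rw [if_neg hvc] at hq
        have h3 := Nat.mul_le_mul_left n (Nat.succ_le_of_lt hq)
        rw [Nat.mul_succ] at h3
        omega
  have hinj : Function.Injective fun q => v.val + n * q := by
    intro a b h
    simp only at h
    exact Nat.eq_of_mul_eq_mul_left hn (by omega)
  rw [step1, himg, Finset.card_image_of_injective _ hinj, Finset.card_range]

/-- The natural equivalence between `Fin n` and `ZMod n`. -/
private def chrEquiv (n : ℕ) [NeZero n] : Fin n ≃ ZMod n where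
  toFun k := ((k : ℕ) : ZMod n)
  invFun w := ⟨w.val, w.val_lt⟩
  left_inv k := by
    apply Fin.ext
    simp [ZMod.val_cast_of_lt k.isLt]
  right_inv w := ZMod.natCast_rightInverse w

end ChrAux

theorem christoffel_mul (R : Type*) [CommRing R] [IsDomain R] (n m₁ m₂ : ℕ)
    (hn : 2 ≤ n) (h₁ : 1 ≤ m₁) (h₁' : m₁ < n) (h₂ : 1 ≤ m₂) (h₂' : m₂ < n)
    (hc₁ : Nat.Coprime m₁ n) (hc₂ : Nat.Coprime m₂ n)
    (a₁ b₁ a₂ b₂ : R) (hab₁ : a₁ ≠ b₁) (hab₂ : a₂ ≠ b₂)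
    (r s : ℤ) (hr : r = ⌈(m₁ * m₂ : ℚ) / n⌉) (hs : s = ⌊(m₁ * m₂ : ℚ) / n⌋)
    (a₃ b₃ : R)
    (ha₃ : a₃ = (r : R) * (a₁ * a₂) + ((m₁ : R) - r) * (a₁ * b₂) +
      ((m₂ : R) - r) * (b₁ * a₂) + ((n : R) - (m₁ : R) - (m₂ : R) + r) * (b₁ * b₂))
    (hb₃ : b₃ = (s : R) * (a₁ * a₂) + ((m₁ : R) - s) * (a₁ * b₂) +
      ((m₂ : R) - s) * (b₁ * a₂) + ((n : R) - (m₁ : R) - (m₂ : R) + s) * (b₁ * b₂)) :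
    christoffel n m₁ a₁ b₁ * christoffel n m₂ a₂ b₂ =
      christoffel n ((m₁ * m₂) % n) a₃ b₃ ∧ a₃ ≠ b₃ := by
  haveI : NeZero n := ⟨by omega⟩
  have hn0 : 0 < n := by omega
  have hndvd : ¬ (n ∣ m₁ * m₂) := by
    intro h
    have hcop : Nat.Coprime (m₁ * m₂) n := Nat.Coprime.mul hc₁ hc₂
    have h1 : n = 1 := hcop.symm.eq_one_of_dvd h
    omega
  have hrrpos : 0 < (m₁ * m₂) % n :=
    Nat.pos_of_ne_zero fun h => hndvd (Nat.dvd_of_mod_eq_zero h)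
  have hdm : n * (m₁ * m₂ / n) + (m₁ * m₂) % n = m₁ * m₂ := Nat.div_add_mod _ _
  have hrrn : (m₁ * m₂) % n < n := Nat.mod_lt _ hn0
  have hnq : (0 : ℚ) < (n : ℚ) := by exact_mod_cast hn0
  have hs' : s = ((m₁ * m₂ / n : ℕ) : ℤ) := by
    rw [hs]
    rw [Int.floor_eq_iff]
    constructor
    · rw [le_div_iff₀ hnq]
      exact_mod_cast Nat.div_mul_le_self (m₁ * m₂) n
    · rw [div_lt_iff₀ hnq]
      have h9 : m₁ * m₂ < (m₁ * m₂ / n + 1) * n := by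
        have h10 : (m₁ * m₂ / n + 1) * n = n * (m₁ * m₂ / n) + n := by ring
        omega
      push_cast
      exact_mod_cast h9
  have hr' : r = ((m₁ * m₂ / n : ℕ) : ℤ) + 1 := by
    rw [hr, Int.ceil_eq_iff]
    constructor
    · push_cast
      rw [add_sub_cancel_right, lt_div_iff₀ hnq]
      have h9 : (m₁ * m₂ / n) * n < m₁ * m₂ := by
        have h10 : (m₁ * m₂ / n) * n = n * (m₁ * m₂ / n) := by ring
        omega
      exact_mod_cast h9
    · push_cast
      rw [div_le_iff₀ hnq]
      have h9 : m₁ * m₂ ≤ (m₁ * m₂ / n + 1) * n := by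
        have h10 : (m₁ * m₂ / n + 1) * n = n * (m₁ * m₂ / n) + n := by ring
        omega
      exact_mod_cast h9
  have hcast_r : (r : R) = ((m₁ * m₂ / n : ℕ) : R) + 1 := by
    rw [hr', Int.cast_add, Int.cast_natCast, Int.cast_one]
  have hcast_s : (s : R) = ((m₁ * m₂ / n : ℕ) : R) := by
    rw [hs', Int.cast_natCast]
  refine ⟨?_, ?_⟩
  · -- the matrix identity
    ext i j
    rw [Matrix.mul_apply]
    simp only [christoffel, Matrix.of_apply]
    set x : ZMod n := ((i : ℕ) : ZMod n) with hx
    set y : ZMod n := ((j : ℕ) : ZMod n) with hy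
    have hm3 : (((m₁ * m₂ % n : ℕ)) : ZMod n) = (m₁ : ZMod n) * (m₂ : ZMod n) := by
      rw [ZMod.natCast_mod]; push_cast; ring
    rw [hm3]
    have hre := Fintype.sum_equiv (chrEquiv n)
      (fun k : Fin n => (if (x - (m₁ : ZMod n) * ((k : ℕ) : ZMod n)).val < m₁ then a₁ else b₁) *
        (if (((k : ℕ) : ZMod n) - (m₂ : ZMod n) * y).val < m₂ then a₂ else b₂))
      (fun u : ZMod n => (if (x - (m₁ : ZMod n) * u).val < m₁ then a₁ else b₁) *
        (if (u - (m₂ : ZMod n) * y).val < m₂ then a₂ else b₂))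
      (fun k => rfl)
    rw [hre]
    have hexp : ∀ u : ZMod n,
        (if (x - (m₁ : ZMod n) * u).val < m₁ then a₁ else b₁) *
          (if (u - (m₂ : ZMod n) * y).val < m₂ then a₂ else b₂)
        = b₁ * b₂ + ((if (x - (m₁ : ZMod n) * u).val < m₁ then (a₁ - b₁) * b₂ else 0)
          + ((if (u - (m₂ : ZMod n) * y).val < m₂ then b₁ * (a₂ - b₂) else 0)
          + (if ((x - (m₁ : ZMod n) * u).val < m₁ ∧ (u - (m₂ : ZMod n) * y).val < m₂)
              then (a₁ - b₁) * (a₂ - b₂) else 0))) := by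
      intro u
      by_cases hu1 : (x - (m₁ : ZMod n) * u).val < m₁ <;>
        by_cases hu2 : (u - (m₂ : ZMod n) * y).val < m₂ <;>
        simp [hu1, hu2] <;> ring
    simp only [hexp]
    rw [Finset.sum_add_distrib, Finset.sum_add_distrib, Finset.sum_add_distrib,
      ← Finset.sum_filter, ← Finset.sum_filter, ← Finset.sum_filter,
      Finset.sum_const, Finset.sum_const, Finset.sum_const, Finset.sum_const,
      Finset.card_univ, ZMod.card]
    -- the three counts
    have c1 : (Finset.univ.filter fun u : ZMod n => (x - (m₁ : ZMod n) * u).val < m₁).card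
        = m₁ := by
      have h := chr_card_equiv (n := n)
        ((Units.mulLeft (ZMod.unitOfCoprime m₁ hc₁)).trans (Equiv.subLeft x))
        (fun w => w.val < m₁)
      have hpe : (Finset.univ.filter fun u : ZMod n =>
            ((((Units.mulLeft (ZMod.unitOfCoprime m₁ hc₁)).trans (Equiv.subLeft x))) u).val < m₁)
          = (Finset.univ.filter fun u : ZMod n => (x - (m₁ : ZMod n) * u).val < m₁) := by
        apply Finset.filter_congr
        intro u _
        rw [show (((Units.mulLeft (ZMod.unitOfCoprime m₁ hc₁)).trans (Equiv.subLeft x))) u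
            = x - (m₁ : ZMod n) * u by
          rw [Equiv.trans_apply, Equiv.subLeft_apply,
            show (Units.mulLeft (ZMod.unitOfCoprime m₁ hc₁)) u
              = (ZMod.unitOfCoprime m₁ hc₁ : ZMod n) * u from rfl,
            ZMod.coe_unitOfCoprime]]
      rw [hpe] at h
      rw [h, chr_card_lt h₁'.le]
    have c2 : (Finset.univ.filter fun u : ZMod n => (u - (m₂ : ZMod n) * y).val < m₂).card
        = m₂ := by
      have h := chr_card_equiv (n := n) (Equiv.subRight ((m₂ : ZMod n) * y))
        (fun w => w.val < m₂)
      have hpe : (Finset.univ.filter fun u : ZMod n =>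
            ((Equiv.subRight ((m₂ : ZMod n) * y)) u).val < m₂)
          = (Finset.univ.filter fun u : ZMod n => (u - (m₂ : ZMod n) * y).val < m₂) := by
        apply Finset.filter_congr
        intro u _
        rw [Equiv.subRight_apply]
      rw [hpe] at h
      rw [h, chr_card_lt h₂'.le]
    have c3 : (Finset.univ.filter fun u : ZMod n =>
          (x - (m₁ : ZMod n) * u).val < m₁ ∧ (u - (m₂ : ZMod n) * y).val < m₂).card
        = if (x - (m₁ : ZMod n) * (m₂ : ZMod n) * y).val < m₁ * m₂ % n
            then m₁ * m₂ / n + 1 else m₁ * m₂ / n := by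
      have h := chr_card_equiv (n := n) (Equiv.addRight ((m₂ : ZMod n) * y))
        (fun u : ZMod n => (x - (m₁ : ZMod n) * u).val < m₁ ∧ (u - (m₂ : ZMod n) * y).val < m₂)
      have hpe : (Finset.univ.filter fun u : ZMod n =>
            (x - (m₁ : ZMod n) * ((Equiv.addRight ((m₂ : ZMod n) * y)) u)).val < m₁ ∧
              (((Equiv.addRight ((m₂ : ZMod n) * y)) u) - (m₂ : ZMod n) * y).val < m₂)
          = (Finset.univ.filter fun u : ZMod n => u.val < m₂ ∧
              ((x - (m₁ : ZMod n) * (m₂ : ZMod n) * y) - (m₁ : ZMod n) * u).val < m₁) := by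
        apply Finset.filter_congr
        intro u _
        rw [show (Equiv.addRight ((m₂ : ZMod n) * y)) u = u + (m₂ : ZMod n) * y from rfl]
        rw [show x - (m₁ : ZMod n) * (u + (m₂ : ZMod n) * y)
            = (x - (m₁ : ZMod n) * (m₂ : ZMod n) * y) - (m₁ : ZMod n) * u by ring]
        rw [show u + (m₂ : ZMod n) * y - (m₂ : ZMod n) * y = u by ring]
        rw [and_comm]
      rw [hpe] at h
      rw [← h, chr_count m₁ m₂ (by omega) h₁' h₂' (x - (m₁ : ZMod n) * (m₂ : ZMod n) * y)]
    rw [c1, c2, c3]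
    split_ifs with hC
    · rw [ha₃, hcast_r]
      simp only [nsmul_eq_mul]
      push_cast
      ring
    · rw [hb₃, hcast_s]
      simp only [nsmul_eq_mul]
      push_cast
      ring
  · -- a₃ ≠ b₃
    have hdiff : a₃ - b₃ = (a₁ - b₁) * (a₂ - b₂) := by
      rw [ha₃, hb₃, hcast_r, hcast_s]; ring
    intro h
    apply mul_ne_zero (sub_ne_zero.mpr hab₁) (sub_ne_zero.mpr hab₂)
    rw [← hdiff, h, sub_self]
end

section
/- Let F be an algebraically closed field, n ≥ 2, m coprime to n, and A = C_m(a,b) an n×n Christoffel matrix over F with a ≠ b. Let k be the multiplicative order of m mod n, δ = a − b, σ = ma + (n−m)b. Then (A^k − δ^k I)(A − σI) = 0, so the minimal polynomial of A divides (x^k − δ^k)(x − σ). -/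
open Matrix Finset

theorem geom_sum_mul_geom_sum_pow {R : Type*} [Semiring R] (x : R) (a b : ℕ) :
    (∑ i ∈ range a, x ^ i) * ∑ j ∈ range b, (x ^ a) ^ j =
      ∑ i ∈ range (a * b), x ^ i := by
  induction b with
  | zero => simp
  | succ b ih =>
    rw [sum_range_succ, mul_add, ih, Nat.mul_succ, sum_range_add, sum_mul]
    congr 1
    refine sum_congr rfl fun i _ => ?_
    rw [← pow_mul, ← pow_add, add_comm]

section funMatrix

variable {ι R : Type*} [Semiring R]

theorem of_one_mul_of_one [Fintype ι] :
    (of 1 * of 1 : Matrix ι ι R) = (Fintype.card ι : R) • of 1 := by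
  ext i j
  simp [mul_apply]

variable [DecidableEq ι]

def funMatrix (f : ι → ι) : Matrix ι ι R := of fun i j => if i = f j then 1 else 0

theorem funMatrix_id : (funMatrix id : Matrix ι ι R) = 1 := by
  ext i j
  simp [funMatrix, one_apply]

variable [Fintype ι]

theorem funMatrix_mul (f g : ι → ι) :
    (funMatrix f * funMatrix g : Matrix ι ι R) = funMatrix (f ∘ g) := by
  ext i j
  simp [funMatrix, mul_apply]

theorem funMatrix_pow (f : ι → ι) (t : ℕ) :
    (funMatrix f : Matrix ι ι R) ^ t = funMatrix f^[t] := by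
  induction t with
  | zero => exact funMatrix_id.symm
  | succ t ih => rw [pow_succ, ih, funMatrix_mul, Function.iterate_succ]

theorem of_one_mul_funMatrix (f : ι → ι) : (of 1 * funMatrix f : Matrix ι ι R) = of 1 := by
  ext i j
  simp [funMatrix, mul_apply]

theorem funMatrix_mul_of_one {f : ι → ι} (hf : f.Bijective) :
    (funMatrix f * of 1 : Matrix ι ι R) = of 1 := by
  ext i j
  obtain ⟨l, rfl⟩ := hf.surjective i
  simp [funMatrix, mul_apply, hf.injective.eq_iff]

end funMatrix

section ZMod

variable {n : ℕ} {R : Type*} [CommRing R]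

variable (R) in
def shiftMatrix : Matrix (ZMod n) (ZMod n) R := funMatrix (· + 1)

variable (R) in
def mulMatrix (u : ZMod n) : Matrix (ZMod n) (ZMod n) R := funMatrix (u * ·)

theorem mulMatrix_one : mulMatrix R (1 : ZMod n) = 1 := by
  simp only [mulMatrix, one_mul]
  exact funMatrix_id

variable [NeZero n]

theorem ZMod.sum_range_ite_eq_natCast {N : ℕ} (hN : N ≤ n) (x : ZMod n) :
    ∑ c ∈ range N, (if x = c then 1 else 0 : R) = if x.val < N then 1 else 0 := by
  trans ∑ c ∈ range N, (if x.val = c then 1 else 0 : R)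
  · refine sum_congr rfl fun c hc => if_congr ⟨fun h => ?_, fun h => ?_⟩ rfl rfl
    · exact h ▸ ZMod.val_cast_of_lt ((mem_range.mp hc).trans_le hN)
    · exact h ▸ (ZMod.natCast_zmod_val x).symm
  · simp [sum_ite_eq]

theorem shiftMatrix_pow (c : ℕ) : shiftMatrix R ^ c = funMatrix (· + (c : ZMod n)) := by
  rw [shiftMatrix, funMatrix_pow, add_right_iterate, nsmul_one]

theorem shiftMatrix_pow_card : shiftMatrix R ^ n = (1 : Matrix (ZMod n) (ZMod n) R) := by
  simp only [shiftMatrix_pow, ZMod.natCast_self, add_zero]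
  exact funMatrix_id

theorem sum_shiftMatrix_pow_range_card :
    ∑ c ∈ range n, shiftMatrix R ^ c = (of 1 : Matrix (ZMod n) (ZMod n) R) := by
  ext i j
  simp only [shiftMatrix_pow, Matrix.sum_apply, funMatrix, of_apply, ← sub_eq_iff_eq_add',
    ZMod.sum_range_ite_eq_natCast le_rfl, ZMod.val_lt, if_true, Pi.one_apply]

theorem sum_shiftMatrix_pow_range (N : ℕ) :
    ∑ c ∈ range N, shiftMatrix R ^ c =
      ((N / n : ℕ) : R) • (of 1 : Matrix (ZMod n) (ZMod n) R) +
        ∑ c ∈ range (N % n), shiftMatrix R ^ c := by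
  conv_lhs => rw [← Nat.div_add_mod N n, sum_range_add, ← geom_sum_mul_geom_sum_pow]
  simp only [shiftMatrix_pow_card, one_pow, sum_const, card_range, sum_shiftMatrix_pow_range_card,
    pow_add, pow_mul, one_mul, Nat.cast_smul_eq_nsmul, mul_smul_one]

theorem mulMatrix_mul (u v : ZMod n) : mulMatrix R u * mulMatrix R v = mulMatrix R (u * v) := by
  simp only [mulMatrix, funMatrix_mul, Function.comp_def, mul_assoc]

theorem mulMatrix_mul_geom_sum_shiftMatrix (u m : ℕ) :
    mulMatrix R (u : ZMod n) * ∑ r ∈ range m, shiftMatrix R ^ r =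
      (∑ r ∈ range m, (shiftMatrix R ^ u) ^ r) * mulMatrix R (u : ZMod n) := by
  rw [mul_sum, sum_mul]
  refine sum_congr rfl fun r _ => ?_
  rw [← pow_mul, shiftMatrix_pow, shiftMatrix_pow, mulMatrix, funMatrix_mul, funMatrix_mul]
  congr 1
  ext x
  simp only [Function.comp_apply, Nat.cast_mul]
  ring

end ZMod

section Pattern

variable {n : ℕ} [NeZero n] {R : Type*} [CommRing R]

variable (R) in
def patternMatrix (m : ℕ) : Matrix (ZMod n) (ZMod n) R :=
  (∑ r ∈ range m, shiftMatrix R ^ r) * mulMatrix R m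

theorem patternMatrix_apply {m : ℕ} (hmn : m ≤ n) (i j : ZMod n) :
    patternMatrix R m i j = if (i - m * j).val < m then 1 else 0 := by
  simp only [patternMatrix, sum_mul, shiftMatrix_pow, mulMatrix, funMatrix_mul]
  simp only [Matrix.sum_apply, funMatrix, of_apply, Function.comp_apply, ← sub_eq_iff_eq_add']
  exact ZMod.sum_range_ite_eq_natCast (R := R) hmn _

theorem patternMatrix_pow (m t : ℕ) :
    patternMatrix R m ^ t =
      (∑ c ∈ range (m ^ t), shiftMatrix R ^ c) * mulMatrix R ((m ^ t : ℕ) : ZMod n) := by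
  induction t with
  | zero => simp [mulMatrix_one]
  | succ t ih =>
    rw [pow_succ, ih, patternMatrix, mul_assoc, ← mul_assoc (mulMatrix _ _),
      mulMatrix_mul_geom_sum_shiftMatrix, mul_assoc, mulMatrix_mul, ← mul_assoc,
      geom_sum_mul_geom_sum_pow, ← pow_succ, ← Nat.cast_mul, ← pow_succ]

theorem patternMatrix_pow_of_pow_mod_eq_one {m k : ℕ} (hk : m ^ k % n = 1) :
    patternMatrix R m ^ k =
      1 + ((m ^ k / n : ℕ) : R) • (of 1 : Matrix (ZMod n) (ZMod n) R) := by
  rw [patternMatrix_pow, sum_shiftMatrix_pow_range, hk, geom_sum_one, ← ZMod.natCast_mod, hk,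
    Nat.cast_one, mulMatrix_one, mul_one, add_comm]

theorem patternMatrix_mul_of_one {m : ℕ} (hm : m.Coprime n) :
    patternMatrix R m * of 1 = (m : R) • (of 1 : Matrix (ZMod n) (ZMod n) R) := by
  have hbij : Function.Bijective ((m : ZMod n) * ·) :=
    IsUnit.isUnit_iff_mulLeft_bijective.mp ((ZMod.isUnit_iff_coprime m n).mpr hm)
  rw [patternMatrix, mul_assoc, mulMatrix, funMatrix_mul_of_one hbij, sum_mul]
  simp only [shiftMatrix_pow, funMatrix_mul_of_one (AddGroup.addRight_bijective _), sum_const,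
    card_range, Nat.cast_smul_eq_nsmul]

theorem of_one_mul_patternMatrix (m : ℕ) :
    of 1 * patternMatrix R m = (m : R) • (of 1 : Matrix (ZMod n) (ZMod n) R) := by
  simp only [patternMatrix, ← mul_assoc, mul_sum, shiftMatrix_pow, of_one_mul_funMatrix,
    sum_const, card_range, Nat.cast_smul_eq_nsmul, smul_mul_assoc, mulMatrix]

end Pattern

section Algebra

variable {R A : Type*} [CommRing R] [Ring A] [Algebra R A] {P J : A} {μ ν : R}

theorem exists_smul_add_smul_pow_eq (hPJ : P * J = μ • J) (hJP : J * P = μ • J)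
    (hJJ : J * J = ν • J) (δ b : R) (t : ℕ) :
    ∃ c : R, (δ • P + b • J) ^ t = δ ^ t • P ^ t + c • J := by
  have hPtJ (t : ℕ) : P ^ t * J = μ ^ t • J := by
    induction t with
    | zero => simp
    | succ t ih => rw [pow_succ', mul_assoc, ih, mul_smul_comm, hPJ, smul_smul, ← pow_succ]
  induction t with
  | zero => exact ⟨0, by simp⟩
  | succ t ih =>
    obtain ⟨c, hc⟩ := ih
    refine ⟨δ ^ t * b * μ ^ t + c * δ * μ + c * b * ν, ?_⟩
    rw [pow_succ, hc]
    simp only [add_mul, mul_add, smul_mul_smul_comm, hPtJ, hJP, hJJ, ← pow_succ]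
    module

theorem smul_add_smul_pow_sub_mul_sub_eq_zero (hPJ : P * J = μ • J) (hJP : J * P = μ • J)
    (hJJ : J * J = ν • J) {k : ℕ} {q : R} (hPk : P ^ k = 1 + q • J) (δ b : R) :
    ((δ • P + b • J) ^ k - δ ^ k • 1) *
      (δ • P + b • J - (δ * μ + b * ν) • 1) = 0 := by
  obtain ⟨c, hc⟩ := exists_smul_add_smul_pow_eq hPJ hJP hJJ δ b k
  have hpow : (δ • P + b • J) ^ k - δ ^ k • 1 = (δ ^ k * q + c) • J := by
    rw [hc, hPk]
    module
  have hJ : J * (δ • P + b • J - (δ * μ + b * ν) • 1) = 0 := by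
    simp only [mul_sub, mul_add, mul_smul_comm, mul_one, hJP, hJJ]
    module
  rw [hpow, smul_mul_assoc, hJ, smul_zero]

end Algebra

theorem pow_orderOf_unitOfCoprime_mod_eq_one {m n : ℕ} (hn : 1 < n) (hc : m.Coprime n) :
    m ^ orderOf (ZMod.unitOfCoprime m hc) % n = 1 := by
  have h : ((m ^ orderOf (ZMod.unitOfCoprime m hc) : ℕ) : ZMod n) = ((1 : ℕ) : ZMod n) := by
    rw [Nat.cast_pow, ← ZMod.coe_unitOfCoprime m hc, ← Units.val_pow_eq_pow_val,
      pow_orderOf_eq_one, Units.val_one, Nat.cast_one]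
  rwa [ZMod.natCast_eq_natCast_iff', Nat.one_mod_eq_one.mpr hn.ne'] at h

theorem ZMod.finEquiv_apply {n : ℕ} [NeZero n] (i : Fin n) :
    ZMod.finEquiv n i = ((i : ℕ) : ZMod n) := by
  obtain ⟨n, rfl⟩ := Nat.exists_eq_succ_of_ne_zero (NeZero.ne n)
  exact (Fin.cast_val_eq_self i).symm

theorem christoffel_eq_reindexAlgEquiv {n m : ℕ} [NeZero n] (hmn : m ≤ n) {R : Type*}
    [CommRing R] (a b : R) :
    christoffel n m a b = reindexAlgEquiv R R (ZMod.finEquiv n).symm.toEquiv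
      ((a - b) • patternMatrix R m + b • of 1) := by
  ext i j
  simp only [coe_reindexAlgEquiv, reindex_apply, submatrix_apply, RingEquiv.toEquiv_eq_coe,
    RingEquiv.coe_toEquiv_symm, Equiv.symm_symm, EquivLike.coe_coe, ZMod.finEquiv_apply,
    Matrix.add_apply, Matrix.smul_apply, patternMatrix_apply hmn, christoffel, of_apply,
    Pi.one_apply, smul_eq_mul]
  split_ifs <;> ring

theorem christoffel_annihilating_poly_general (F : Type*) [Field F]
    (n m : ℕ) (hn : 2 ≤ n) (hm' : m < n) (hc : Nat.Coprime m n)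
    (a b : F)
    (k : ℕ) (hk : k = orderOf (ZMod.unitOfCoprime m hc))
    (δ σ : F) (hδ : δ = a - b) (hσ : σ = (m : F) * a + ((n : F) - (m : F)) * b) :
    ((christoffel n m a b) ^ k - (δ ^ k) • (1 : Matrix (Fin n) (Fin n) F)) *
        ((christoffel n m a b) - σ • (1 : Matrix (Fin n) (Fin n) F)) = 0 ∧
      minpoly F (christoffel n m a b) ∣
        (Polynomial.X ^ k - Polynomial.C (δ ^ k)) * (Polynomial.X - Polynomial.C σ) := by
  have : NeZero n := ⟨by omega⟩
  have hmk : m ^ k % n = 1 := hk ▸ pow_orderOf_unitOfCoprime_mod_eq_one (by omega) hc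
  have hZ := smul_add_smul_pow_sub_mul_sub_eq_zero (patternMatrix_mul_of_one hc)
    (of_one_mul_patternMatrix m) of_one_mul_of_one
    (patternMatrix_pow_of_pow_mod_eq_one (R := F) hmk) (a - b) b
  have hσ' : σ = (a - b) * m + b * Fintype.card (ZMod n) := by
    rw [hσ, ZMod.card]
    ring
  have key : (christoffel n m a b ^ k - δ ^ k • 1) * (christoffel n m a b - σ • 1) = 0 := by
    rw [christoffel_eq_reindexAlgEquiv hm'.le, hδ, hσ']
    simpa only [map_mul, map_sub, map_pow, map_smul, map_one, map_zero] using
      congrArg (reindexAlgEquiv F F (ZMod.finEquiv n).symm.toEquiv) hZ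
  refine ⟨key, minpoly.dvd F _ ?_⟩
  simpa only [map_mul, map_sub, Polynomial.aeval_X_pow, Polynomial.aeval_X, Polynomial.aeval_C,
    Algebra.algebraMap_eq_smul_one] using key

theorem christoffel_annihilating_poly (F : Type*) [Field F] [IsAlgClosed F]
    (n m : ℕ) (hn : 2 ≤ n) (hm : 1 ≤ m) (hm' : m < n) (hc : Nat.Coprime m n)
    (a b : F) (hab : a ≠ b)
    (k : ℕ) (hk : k = orderOf (ZMod.unitOfCoprime m hc))
    (δ σ : F) (hδ : δ = a - b) (hσ : σ = (m : F) * a + ((n : F) - (m : F)) * b) :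
    ((christoffel n m a b) ^ k - (δ ^ k) • (1 : Matrix (Fin n) (Fin n) F)) *
        ((christoffel n m a b) - σ • (1 : Matrix (Fin n) (Fin n) F)) = 0 ∧
      minpoly F (christoffel n m a b) ∣
        (Polynomial.X ^ k - Polynomial.C (δ ^ k)) * (Polynomial.X - Polynomial.C σ) :=
  christoffel_annihilating_poly_general F n m hn hm' hc a b k hk δ σ hδ hσ
end

section
/- Let F be a field, n ≥ 2, m coprime to n, and a, b ∈ F with a ≠ b. Then the Christoffel matrix C_m(a,b) over F is invertible if and only if ma + (n−m)b ≠ 0 in F. -/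
open Finset
section
set_option linter.unusedSectionVars false
variable {F : Type*} [Field F] {n m : ℕ}

private def vf (n m : ℕ) (a b : F) (d : ZMod n) : F := if d.val < m then a else b

private lemma neg_one_eq (hn : 2 ≤ n) : ((n - 1 : ℕ) : ZMod n) = -1 := by
  rw [Nat.cast_sub (by omega), ZMod.natCast_self, Nat.cast_one, zero_sub]

private lemma vf_step (hn : 2 ≤ n) (hm : 1 ≤ m) (hm' : m < n) (a b : F) (d : ZMod n)
    (h1 : d ≠ ((m - 1 : ℕ) : ZMod n)) (h2 : d ≠ -1) :
    vf n m a b (d + 1) = vf n m a b d := by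
  have hn0 : NeZero n := ⟨by omega⟩
  have hd : d = ((d.val : ℕ) : ZMod n) := (ZMod.natCast_rightInverse d).symm
  set k := d.val with hk
  have hkn : k < n := ZMod.val_lt d
  have hk1 : k ≠ m - 1 := fun h => h1 (by rw [hd, h])
  have hk2 : k ≠ n - 1 := fun h => h2 (by rw [hd, h, neg_one_eq hn])
  have hval : (d + 1).val = k + 1 := by
    rw [hd, ← Nat.cast_add_one, ZMod.val_cast_of_lt (by omega)]
  unfold vf
  rw [hval]
  rcases lt_or_ge k m with h | h
  · rw [if_pos (by omega), if_pos h]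
  · rw [if_neg (by omega), if_neg (by omega)]

private lemma vf_sum [NeZero n] (hm' : m < n) (a b : F) :
    ∑ z : ZMod n, vf n m a b z = m • a + (n - m) • b := by
  have hbij : Function.Bijective (fun i : Fin n => ((i : ℕ) : ZMod n)) := by
    rw [Fintype.bijective_iff_injective_and_card]
    refine ⟨fun i j hij => ?_, by simp [ZMod.card]⟩
    have := congrArg ZMod.val hij
    rwa [ZMod.val_cast_of_lt i.2, ZMod.val_cast_of_lt j.2, ← Fin.ext_iff] at this
  rw [← Fintype.sum_bijective _ hbij _ (vf n m a b) (fun _ => rfl)]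
  have : ∀ i : Fin n, vf n m a b ((i : ℕ) : ZMod n) = if (i : ℕ) < m then a else b := by
    intro i; unfold vf; rw [ZMod.val_cast_of_lt i.2]
  rw [Finset.sum_congr rfl (fun i _ => this i), Fin.sum_univ_eq_sum_range (fun i => if i < m then a else b)]
  rw [Finset.range_eq_Ico, ← Finset.sum_Ico_consecutive _ (Nat.zero_le m) (le_of_lt hm')]
  rw [Finset.sum_congr rfl (g := fun _ => a) (fun i hi => if_pos (Finset.mem_Ico.mp hi).2),
      Finset.sum_congr rfl (g := fun _ => b) (fun i hi => if_neg (by simpa using Nat.not_lt.mpr (Finset.mem_Ico.mp hi).1))]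
  simp [Nat.card_Ico]

private lemma row_sum [NeZero n] (hm' : m < n) (hc : Nat.Coprime m n) (a b : F) (i : ZMod n) :
    ∑ j : Fin n, vf n m a b (i - (m : ZMod n) * ((j : ℕ) : ZMod n)) = m • a + (n - m) • b := by
  rw [← vf_sum hm' a b]
  apply Fintype.sum_bijective (fun j : Fin n => i - (m : ZMod n) * ((j : ℕ) : ZMod n)) ?_ _ _ (fun _ => rfl)
  rw [Fintype.bijective_iff_injective_and_card]
  refine ⟨fun x y hxy => ?_, by simp [ZMod.card]⟩
  have hu : IsUnit (m : ZMod n) := by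
    simpa [ZMod.coe_unitOfCoprime] using (ZMod.unitOfCoprime m hc).isUnit
  have hxy2 : (m : ZMod n) * ((x : ℕ) : ZMod n) = (m : ZMod n) * ((y : ℕ) : ZMod n) := by
    have := sub_right_injective hxy
    simpa using this
  have := hu.mul_left_cancel hxy2
  have := congrArg ZMod.val this
  rwa [ZMod.val_cast_of_lt x.2, ZMod.val_cast_of_lt y.2, ← Fin.ext_iff] at this

end

theorem christoffel_invertible_iff (F : Type*) [Field F]
    (n m : ℕ) (hn : 2 ≤ n) (hm : 1 ≤ m) (hm' : m < n) (hc : Nat.Coprime m n)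
    (a b : F) (hab : a ≠ b) :
    IsUnit (christoffel n m a b) ↔ (m : F) * a + ((n : F) - (m : F)) * b ≠ 0 := by
  classical
  have hn0 : NeZero n := ⟨by omega⟩
  haveI : Fact (1 < n) := ⟨by omega⟩
  have hs : (m • a + (n - m) • b : F) = (m : F) * a + ((n : F) - (m : F)) * b := by
    rw [nsmul_eq_mul, nsmul_eq_mul, Nat.cast_sub (le_of_lt hm')]
  have key : ∀ i : ZMod n,
      ∑ j : Fin n, vf n m a b (i - (m : ZMod n) * ((j : ℕ) : ZMod n))
        = (m : F) * a + ((n : F) - (m : F)) * b := fun i => by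
    rw [row_sum hm' hc a b i, hs]
  rw [Matrix.isUnit_iff_isUnit_det, isUnit_iff_ne_zero]
  constructor
  · intro hdet hs0
    apply hdet
    rw [← Matrix.exists_mulVec_eq_zero_iff]
    refine ⟨fun _ => 1, fun h => ?_, ?_⟩
    · have := congrFun h ⟨0, by omega⟩
      simp at this
    · funext i
      have := key ((i : ℕ) : ZMod n)
      rw [hs0] at this
      simpa [christoffel, Matrix.mulVec, dotProduct, vf] using this
  · intro hsne hdet
    obtain ⟨w, hw0, hw⟩ := Matrix.exists_mulVec_eq_zero_iff.mpr hdet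
    have T : ∀ i : ZMod n,
        ∑ j : Fin n, vf n m a b (i - (m : ZMod n) * ((j : ℕ) : ZMod n)) * w j = 0 := by
      intro i
      have h := congrFun hw ⟨i.val, i.val_lt⟩
      have hi : ((i.val : ℕ) : ZMod n) = i := ZMod.natCast_rightInverse i
      simpa [christoffel, Matrix.mulVec, dotProduct, vf, hi] using h
    set W : ZMod n → F := fun z => w ⟨z.val, z.val_lt⟩ with hWdef
    have hwW : ∀ j : Fin n, w j = W (((j : ℕ) : ZMod n)) := by
      intro j
      simp only [hWdef]
      congr 1
      exact Fin.ext (ZMod.val_cast_of_lt j.2).symm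
    have hmu : IsUnit (m : ZMod n) := by
      simpa [ZMod.coe_unitOfCoprime] using (ZMod.unitOfCoprime m hc).isUnit
    have hstep : ∀ z : ZMod n, W (z + 1) = W z := by
      intro z
      set i : ZMod n := (m : ZMod n) * (z + 1) - 1 with hidef
      have h3 : ∑ j : Fin n,
          (vf n m a b (i + 1 - (m : ZMod n) * ((j : ℕ) : ZMod n))
            - vf n m a b (i - (m : ZMod n) * ((j : ℕ) : ZMod n))) * w j = 0 := by
        simp only [sub_mul]
        rw [Finset.sum_sub_distrib, T (i + 1), T i, sub_zero]
      set j₁ : Fin n := ⟨z.val, z.val_lt⟩ with hj₁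
      set j₂ : Fin n := ⟨(z + 1).val, (z + 1).val_lt⟩ with hj₂
      have hcast₁ : ((j₁ : ℕ) : ZMod n) = z := ZMod.natCast_rightInverse z
      have hcast₂ : ((j₂ : ℕ) : ZMod n) = z + 1 := ZMod.natCast_rightInverse (z + 1)
      have hne : j₂ ≠ j₁ := by
        intro h
        have h2 : z + 1 = z := by rw [← hcast₂, h, hcast₁]
        have : (1 : ZMod n) = 0 := by linear_combination h2
        exact one_ne_zero this
      have h4 : ∑ j : Fin n,
          (vf n m a b (i + 1 - (m : ZMod n) * ((j : ℕ) : ZMod n))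
            - vf n m a b (i - (m : ZMod n) * ((j : ℕ) : ZMod n))) * w j
          = (vf n m a b (i + 1 - (m : ZMod n) * ((j₂ : ℕ) : ZMod n))
              - vf n m a b (i - (m : ZMod n) * ((j₂ : ℕ) : ZMod n))) * w j₂
            + (vf n m a b (i + 1 - (m : ZMod n) * ((j₁ : ℕ) : ZMod n))
              - vf n m a b (i - (m : ZMod n) * ((j₁ : ℕ) : ZMod n))) * w j₁ := by
        refine Finset.sum_eq_add_of_mem _ _ (Finset.mem_univ _) (Finset.mem_univ _) hne ?_
        rintro j - ⟨hja, hjb⟩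
        have hd1 : i - (m : ZMod n) * ((j : ℕ) : ZMod n) ≠ ((m - 1 : ℕ) : ZMod n) := by
          intro h
          apply hjb
          rw [Nat.cast_sub hm, Nat.cast_one, hidef] at h
          have hmz : (m : ZMod n) * z = (m : ZMod n) * ((j : ℕ) : ZMod n) := by
            linear_combination h
          have hz := hmu.mul_left_cancel hmz
          have := congrArg ZMod.val hz
          rw [ZMod.val_cast_of_lt j.2] at this
          exact Fin.ext this.symm
        have hd2 : i - (m : ZMod n) * ((j : ℕ) : ZMod n) ≠ -1 := by
          intro h
          apply hja
          rw [hidef] at h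
          have hmz : (m : ZMod n) * (z + 1) = (m : ZMod n) * ((j : ℕ) : ZMod n) := by
            linear_combination h
          have hz := hmu.mul_left_cancel hmz
          have := congrArg ZMod.val hz
          rw [ZMod.val_cast_of_lt j.2] at this
          exact Fin.ext this.symm
        rw [show i + 1 - (m : ZMod n) * ((j : ℕ) : ZMod n)
              = (i - (m : ZMod n) * ((j : ℕ) : ZMod n)) + 1 by ring,
            vf_step hn hm hm' a b _ hd1 hd2, sub_self, zero_mul]
      have e2a : i + 1 - (m : ZMod n) * ((j₂ : ℕ) : ZMod n) = 0 := by
        rw [hcast₂, hidef]; ring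
      have e2b : i - (m : ZMod n) * ((j₂ : ℕ) : ZMod n) = -1 := by
        rw [hcast₂, hidef]; ring
      have e1a : i + 1 - (m : ZMod n) * ((j₁ : ℕ) : ZMod n) = ((m : ℕ) : ZMod n) := by
        rw [hcast₁, hidef]; ring
      have e1b : i - (m : ZMod n) * ((j₁ : ℕ) : ZMod n) = ((m - 1 : ℕ) : ZMod n) := by
        rw [hcast₁, hidef, Nat.cast_sub hm, Nat.cast_one]; ring
      have hv0 : vf n m a b (0 : ZMod n) = a := by
        unfold vf; rw [ZMod.val_zero]; exact if_pos (by omega)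
      have hvm : vf n m a b ((m : ℕ) : ZMod n) = b := by
        unfold vf; rw [ZMod.val_cast_of_lt hm']; exact if_neg (by omega)
      have hvm1 : vf n m a b ((m - 1 : ℕ) : ZMod n) = a := by
        unfold vf; rw [ZMod.val_cast_of_lt (by omega)]; exact if_pos (by omega)
      have hvneg : vf n m a b (-1 : ZMod n) = b := by
        unfold vf
        rw [← neg_one_eq hn, ZMod.val_cast_of_lt (by omega)]
        exact if_neg (by omega)
      have h5 : (a - b) * (W (z + 1) - W z) = 0 := by
        rw [h4, e2a, e2b, e1a, e1b, hv0, hvneg, hvm, hvm1] at h3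
        have hW2 : W (z + 1) = w j₂ := rfl
        have hW1 : W z = w j₁ := rfl
        rw [hW2, hW1]
        linear_combination h3
      rcases mul_eq_zero.mp h5 with h | h
      · exact absurd (sub_eq_zero.mp h) hab
      · exact sub_eq_zero.mp h
    have hconstN : ∀ k : ℕ, W ((k : ℕ) : ZMod n) = W 0 := by
      intro k
      induction k with
      | zero => norm_num
      | succ k ih => rw [Nat.cast_succ, hstep, ih]
    have hconst : ∀ j : Fin n, w j = W 0 := by
      intro j
      rw [hwW j, ← hconstN (j : ℕ)]
    have h6 : ((m : F) * a + ((n : F) - (m : F)) * b) * W 0 = 0 := by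
      calc ((m : F) * a + ((n : F) - (m : F)) * b) * W 0
          = (∑ j : Fin n, vf n m a b (0 - (m : ZMod n) * ((j : ℕ) : ZMod n))) * W 0 := by
            rw [key 0]
        _ = ∑ j : Fin n, vf n m a b (0 - (m : ZMod n) * ((j : ℕ) : ZMod n)) * w j := by
            rw [Finset.sum_mul]
            exact Finset.sum_congr rfl (fun j _ => by rw [hconst j])
        _ = 0 := T 0
    have hW0 : W 0 = 0 := by
      rcases mul_eq_zero.mp h6 with h | h
      · exact absurd h hsne
      · exact h
    apply hw0
    funext j
    simp [hconst j, hW0]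
end

section
/- Let R be an integral domain and let C_m(a,b) be an invertible n×n Christoffel matrix over R. Then its inverse is a Christoffel matrix over R of type m^{-1} mod n. -/
/-!
Write `C_m(a,b) = (a - b) • P_m + b • J` with `P_m = C_m(1,0)` and `J` the all-ones matrix. The rows
and columns of `P_m` each contain `m` ones, and if `m m' = q n + 1` then `P_m P_{m'} = q J + 1`:
the `(i,j)` entry counts the `w < m'` with `(i - j - m w) mod n < m`, i.e. (writing `x = m w + r`
with `r < m`) the `x < m m'` with `x ≡ i - j [MOD n]`, and there are `q + [i = j]` of those.
So `C_m(a,b) C_{m'}(c,d)` is a combination of `1` and `J`, and `c, d` can be chosen to make it `1`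
as soon as `a - b` and `m (a - b) + n b` are units. They are, because `C_m(a,b)` maps `e₀ - e₁`
into `(a - b) Rⁿ` and the all-ones vector to `(m (a - b) + n b) • 1`.
-/

open Finset

namespace ZMod

theorem natCast_fin_injective (n : ℕ) : Function.Injective fun k : Fin n => ((k : ℕ) : ZMod n) :=
  fun i j h => Fin.ext <| by
    simpa only [val_cast_of_lt i.isLt, val_cast_of_lt j.isLt] using congrArg val h

theorem natCast_mul_natCast_eq_one {n m m' : ℕ} (h : m * m' % n = 1) : (m : ZMod n) * m' = 1 := by
  rw [← Nat.cast_mul, ← natCast_mod, h, Nat.cast_one]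

variable {n : ℕ} [NeZero n]

theorem sum_fin_natCast {M : Type*} [AddCommMonoid M] (f : ZMod n → M) :
    ∑ k : Fin n, f (k : ℕ) = ∑ v : ZMod n, f v :=
  Fintype.sum_bijective _ ((Fintype.bijective_iff_injective_and_card _).2
    ⟨natCast_fin_injective n, by simp⟩) _ _ fun _ => rfl

theorem card_filter_val_lt {c : ℕ} (hc : c ≤ n) : #{v : ZMod n | v.val < c} = c := by
  have : #{v : ZMod n | v.val < c} = #(range c) :=
    card_nbij' val (fun x : ℕ => (x : ZMod n)) (fun v hv => by simpa using hv)
      (fun x hx => by simpa [val_cast_of_lt ((mem_range.1 hx).trans_le hc)] using hx)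
      (fun v _ => natCast_zmod_val v)
      (fun x hx => val_cast_of_lt ((mem_range.1 hx).trans_le hc))
  simpa using this

theorem card_filter_val_perm_lt (σ : Equiv.Perm (ZMod n)) {c : ℕ} (hc : c ≤ n) :
    #{v : ZMod n | (σ v).val < c} = c :=
  (card_equiv σ (by simp)).trans (card_filter_val_lt hc)

theorem card_filter_val_sub_mul_lt_and_val_lt {m m' : ℕ} (hm : m ≤ n) (hm' : m' ≤ n)
    (hmm' : m * m' % n = 1) (t : ZMod n) :
    #{w : ZMod n | (t - m * w).val < m ∧ w.val < m'} = m * m' / n + if t = 0 then 1 else 0 := by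
  have hm0 : 0 < m := Nat.pos_of_ne_zero fun h => by simp [h] at hmm'
  have hdiv_lt {x : ℕ} (hx : x < m * m') : x / m < m' :=
    (Nat.div_lt_iff_lt_mul hm0).2 (by rwa [Nat.mul_comm])
  have key {x : ℕ} (hx : (x : ZMod n) = t) : (t - m * ((x / m : ℕ) : ZMod n)).val = x % m := by
    have hx' : (x : ZMod n) = m * ((x / m : ℕ) : ZMod n) + ((x % m : ℕ) : ZMod n) := by
      exact_mod_cast congrArg (Nat.cast : ℕ → ZMod n) (Nat.div_add_mod x m).symm
    rw [← hx, hx', add_sub_cancel_left, val_cast_of_lt ((Nat.mod_lt x hm0).trans_le hm)]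
  calc #{w : ZMod n | (t - m * w).val < m ∧ w.val < m'}
      = #{x ∈ range (m * m') | ((x : ℕ) : ZMod n) = t} := by
        refine card_nbij' (fun w => m * w.val + (t - m * w).val)
          (fun x : ℕ => ((x / m : ℕ) : ZMod n)) ?_ ?_ ?_ ?_
        all_goals
          intro _ h
          simp only [coe_filter, mem_univ, true_and, Set.mem_ofPred_eq, mem_range] at h ⊢
        · refine ⟨by nlinarith, ?_⟩
          push_cast
          rw [natCast_zmod_val, natCast_zmod_val]
          ring
        · rw [key h.2, val_cast_of_lt ((hdiv_lt h.1).trans_le hm')]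
          exact ⟨Nat.mod_lt _ hm0, hdiv_lt h.1⟩
        · rw [Nat.mul_add_div hm0, Nat.div_eq_of_lt h.1, add_zero, natCast_zmod_val]
        · rw [val_cast_of_lt ((hdiv_lt h.1).trans_le hm'), key h.2, Nat.div_add_mod]
    _ = (m * m').count (· ≡ t.val [MOD n]) := by
        simp only [Nat.count_eq_card_filter_range, ← natCast_eq_natCast_iff, natCast_zmod_val]
    _ = m * m' / n + if t = 0 then 1 else 0 := by
        rw [Nat.count_modEq_card _ (NeZero.pos n), hmm', Nat.mod_eq_of_lt (val_lt t)]
        simp only [Nat.lt_one_iff, val_eq_zero]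

end ZMod

open Matrix

theorem Matrix.isUnit_of_mulVec_eq_smul {ι R : Type*} [Fintype ι] [DecidableEq ι] [CommRing R]
    {M : Matrix ι ι R} (hM : IsUnit M.det) {v w : ι → R} {x : R} (h : M *ᵥ v = x • w) {i : ι}
    (hv : IsUnit (v i)) : IsUnit x := by
  have hv' : v = x • (M⁻¹ *ᵥ w) := by
    rw [← mulVec_smul, ← h, mulVec_mulVec, nonsing_inv_mul _ hM, one_mulVec]
  rw [hv'] at hv
  exact isUnit_of_mul_isUnit_left hv

section Christoffel

variable {R : Type*} [CommRing R] {n m m' : ℕ}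

theorem christoffel_eq_smul_add_smul (a b : R) :
    christoffel n m a b = (a - b) • christoffel n m 1 0 + b • of 1 := by
  ext i j
  simp only [christoffel, of_apply, Matrix.add_apply, Matrix.smul_apply, Pi.one_apply, smul_eq_mul]
  split_ifs <;> ring

theorem ones_mulVec_single_sub_single (j k : Fin n) :
    (of 1 : Matrix (Fin n) (Fin n) R) *ᵥ (Pi.single j 1 - Pi.single k 1) = 0 := by
  ext i
  simp [mulVec, dotProduct, sum_sub_distrib]

theorem christoffel_mulVec_single_sub_single (a b : R) (j k : Fin n) :
    christoffel n m a b *ᵥ (Pi.single j 1 - Pi.single k 1)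
      = (a - b) • (christoffel n m 1 0 *ᵥ (Pi.single j 1 - Pi.single k 1)) := by
  rw [christoffel_eq_smul_add_smul, add_mulVec, smul_mulVec, smul_mulVec,
    ones_mulVec_single_sub_single, smul_zero, add_zero]

theorem ones_mul_ones : (of 1 : Matrix (Fin n) (Fin n) R) * of 1 = (n : R) • of 1 := by
  ext i j
  simp [mul_apply]

variable [NeZero n]

theorem sum_christoffel_row (hu : IsUnit (m : ZMod n)) (hm : m ≤ n) (i : Fin n) :
    ∑ k, christoffel n m (1 : R) 0 i k = m := by
  simp only [christoffel, of_apply]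
  refine (ZMod.sum_fin_natCast
    fun v => if (((i : ℕ) : ZMod n) - (m : ZMod n) * v).val < m then (1 : R) else 0).trans ?_
  rw [sum_boole]
  exact congrArg Nat.cast
    (ZMod.card_filter_val_perm_lt (hu.unit.mulLeft.trans (Equiv.subLeft ((i : ℕ) : ZMod n))) hm)

theorem sum_christoffel_col (hm : m ≤ n) (j : Fin n) :
    ∑ k, christoffel n m (1 : R) 0 k j = m := by
  simp only [christoffel, of_apply]
  refine (ZMod.sum_fin_natCast
    fun v => if (v - (m : ZMod n) * ((j : ℕ) : ZMod n)).val < m then (1 : R) else 0).trans ?_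
  rw [sum_boole]
  exact congrArg Nat.cast
    (ZMod.card_filter_val_perm_lt (Equiv.subRight ((m : ZMod n) * ((j : ℕ) : ZMod n))) hm)

theorem christoffel_one_zero_mul_christoffel_one_zero (hm : m ≤ n) (hm' : m' ≤ n)
    (hmm' : m * m' % n = 1) :
    christoffel n m (1 : R) 0 * christoffel n m' 1 0 = ((m * m' / n : ℕ) : R) • of 1 + 1 := by
  have hinv := ZMod.natCast_mul_natCast_eq_one hmm'
  ext i j
  set I : ZMod n := ((i : ℕ) : ZMod n)
  set J : ZMod n := ((j : ℕ) : ZMod n)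
  calc (christoffel n m (1 : R) 0 * christoffel n m' 1 0 : Matrix (Fin n) (Fin n) R) i j
      = ∑ k : Fin n, if (I - (m : ZMod n) * ((k : ℕ) : ZMod n)).val < m ∧
          (((k : ℕ) : ZMod n) - (m' : ZMod n) * J).val < m' then (1 : R) else 0 := by
        simp only [mul_apply, christoffel, of_apply, ite_zero_mul_ite_zero, mul_one, I, J]
    _ = ∑ v : ZMod n, if (I - (m : ZMod n) * v).val < m ∧
          (v - (m' : ZMod n) * J).val < m' then (1 : R) else 0 :=
        ZMod.sum_fin_natCast fun v => if (I - (m : ZMod n) * v).val < m ∧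
          (v - (m' : ZMod n) * J).val < m' then (1 : R) else 0
    _ = ∑ w : ZMod n, if (I - J - (m : ZMod n) * w).val < m ∧ w.val < m' then (1 : R) else 0 := by
        refine (Fintype.sum_equiv (Equiv.addRight ((m' : ZMod n) * J)) _ _ fun w => ?_).symm
        have hshift : I - (m : ZMod n) * (w + m' * J) = I - J - m * w := by
          linear_combination (-J) * hinv
        simp only [Equiv.coe_addRight, hshift, add_sub_cancel_right]
    _ = (((m * m' / n : ℕ) : R) • of 1 + 1 : Matrix (Fin n) (Fin n) R) i j := by
        rw [sum_boole, ZMod.card_filter_val_sub_mul_lt_and_val_lt hm hm' hmm']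
        simp [one_apply, I, J, sub_eq_zero, (ZMod.natCast_fin_injective n).eq_iff]

theorem christoffel_one_zero_mul_ones (hu : IsUnit (m : ZMod n)) (hm : m ≤ n) :
    christoffel n m (1 : R) 0 * of 1 = (m : R) • of 1 := by
  ext i j
  simp [mul_apply, sum_christoffel_row hu hm]

theorem ones_mul_christoffel_one_zero (hm : m ≤ n) :
    of 1 * christoffel n m (1 : R) 0 = (m : R) • of 1 := by
  ext i j
  simp [mul_apply, sum_christoffel_col hm]

theorem christoffel_mulVec_one (hu : IsUnit (m : ZMod n)) (hm : m ≤ n) (a b : R) :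
    christoffel n m a b *ᵥ 1 = ((a - b) * m + b * n) • 1 := by
  ext i
  rw [christoffel_eq_smul_add_smul, add_mulVec, smul_mulVec, smul_mulVec]
  simp [mulVec, dotProduct, sum_christoffel_row hu hm]

theorem christoffel_mul_christoffel (hm : m ≤ n) (hm' : m' ≤ n) (hmm' : m * m' % n = 1)
    (a b c d : R) :
    christoffel n m a b * christoffel n m' c d = ((a - b) * (c - d)) • 1 +
      ((a - b) * (c - d) * (m * m' / n : ℕ) + (a - b) * d * m + b * (c - d) * m' + b * d * n) •
        of 1 := by
  have hu := IsUnit.of_mul_eq_one _ (ZMod.natCast_mul_natCast_eq_one hmm')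
  simp only [christoffel_eq_smul_add_smul a b, christoffel_eq_smul_add_smul c d, add_mul, mul_add,
    smul_mul_smul, christoffel_one_zero_mul_christoffel_one_zero hm hm' hmm',
    christoffel_one_zero_mul_ones hu hm, ones_mul_christoffel_one_zero hm', ones_mul_ones]
  module

end Christoffel

theorem christoffel_inverse_general (R : Type*) [CommRing R]
    (n m : ℕ) (hn : 2 ≤ n) (hm' : m < n) (hc : Nat.Coprime m n)
    (a b : R) (hab : a ≠ b)
    (hinv : IsUnit (christoffel n m a b).det) :
    ∃ c d : R, c ≠ d ∧
      (christoffel n m a b)⁻¹ = christoffel n (((m : ZMod n)⁻¹).val) c d := by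
  have : NeZero n := ⟨by omega⟩
  have : Nontrivial R := nontrivial_of_ne a b hab
  set m' := ((m : ZMod n)⁻¹).val
  have hm'n : m' ≤ n := (ZMod.val_lt _).le
  have hmm' : m * m' % n = 1 := by
    rw [← ZMod.val_natCast, Nat.cast_mul, ZMod.natCast_zmod_val, ZMod.coe_mul_inv_eq_one m hc,
      ZMod.val_one'' (by omega)]
  have hu : IsUnit (m : ZMod n) := IsUnit.of_mul_eq_one _ (ZMod.coe_mul_inv_eq_one m hc)
  obtain ⟨e, he⟩ := (isUnit_of_mulVec_eq_smul hinv
    (christoffel_mulVec_single_sub_single a b ⟨0, by omega⟩ ⟨1, hn⟩) (i := ⟨0, by omega⟩)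
    (by simp)).exists_right_inv
  obtain ⟨s, hs⟩ := (isUnit_of_mulVec_eq_smul hinv (christoffel_mulVec_one hu hm'.le a b)
    (i := ⟨0, by omega⟩) (by simp)).exists_right_inv
  set d := -((m * m' / n : ℕ) + m' * b * e) * s
  refine ⟨d + e, d, by simpa using right_ne_zero_of_mul_eq_one he, Matrix.inv_eq_right_inv ?_⟩
  have hcoeff : ((m * m' / n : ℕ) : R) + (a - b) * d * m + b * e * m' + b * d * n = 0 := by
    linear_combination -((m * m' / n : ℕ) + m' * b * e) * hs
  rw [christoffel_mul_christoffel hm'.le hm'n hmm', add_sub_cancel_left, he, one_mul, hcoeff,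
    one_smul, zero_smul, add_zero]

theorem christoffel_inverse (R : Type*) [CommRing R] [IsDomain R]
    (n m : ℕ) (hn : 2 ≤ n) (hm : 1 ≤ m) (hm' : m < n) (hc : Nat.Coprime m n)
    (a b : R) (hab : a ≠ b)
    (hinv : IsUnit (christoffel n m a b).det) :
    ∃ c d : R, c ≠ d ∧
      (christoffel n m a b)⁻¹ = christoffel n (((m : ZMod n)⁻¹).val) c d :=
  christoffel_inverse_general R n m hn hm' hc a b hab hinv
end

section
/- If n > 2 is even, then the group GC_n(𝔽₂) of invertible n×n Christoffel matrices over 𝔽₂ has order 2·φ(n) and is not cyclic: the elements C₁(0,1), C_{n−1}(1,0) and C_{n−1}(0,1) are three distinct elements of order 2. -/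
/-- A matrix is a Christoffel matrix if it equals `C_m(a,b)` for some `m` coprime to `n`
and distinct `a, b`. -/
def IsChristoffel {R : Type*} (n : ℕ) (M : Matrix (Fin n) (Fin n) R) : Prop :=
  ∃ (m : ℕ) (a b : R), 1 ≤ m ∧ m < n ∧ Nat.Coprime m n ∧ a ≠ b ∧ M = christoffel n m a b

/-!
Index rows and columns by `ZMod n`. Column `j` of `C_m(a,b)` is `b` plus `a - b` on the cyclic
window `{m j, …, m j + m - 1}`, so a row vector `w` with `w C_m(a,b) = 0` has the same sum `W(c)`
over every window of length `m` (as `a ≠ b` and `j ↦ m j` is onto). Comparing `W(c)` and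
`W(c+1)` shows that `w` has period `m`, hence is constant because `m` is a unit mod `n`; then
`w C_m(a,b) = 0` reduces to `w₀ (m a + (n - m) b) = 0`. Over `𝔽₂` with `n` even, `m` is odd and
`m a + (n - m) b = a + b = 1`, so all `2 φ(n)` Christoffel matrices are invertible, and they are
pairwise distinct.

With `J` the all-ones matrix and `R` the reversal permutation matrix, `C₁(0,1) = J + 1`,
`C_{n-1}(0,1) = R` and `C_{n-1}(1,0) = J + R`; since `J² = n J = 0`, `J R = R J = J` and `R² = 1`,
these are three distinct involutions. A cyclic group has at most one involution.
-/

open Finset Matrix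

def Fin.equivZMod (n : ℕ) [NeZero n] : Fin n ≃ ZMod n where
  toFun i := (i : ℕ)
  invFun x := ⟨x.val, x.val_lt⟩
  left_inv i := Fin.ext (ZMod.val_cast_of_lt i.isLt)
  right_inv x := ZMod.natCast_zmod_val x

lemma Fin.equivZMod_apply {n : ℕ} [NeZero n] (i : Fin n) :
    Fin.equivZMod n i = ((i : ℕ) : ZMod n) :=
  rfl

lemma Fin.natCast_val_zmod_inj {n : ℕ} [NeZero n] {i j : Fin n} :
    ((i : ℕ) : ZMod n) = ((j : ℕ) : ZMod n) ↔ i = j :=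
  (Fin.equivZMod n).injective.eq_iff

lemma Fin.zero_ne_one_of_one_lt {n : ℕ} [NeZero n] (hn : 1 < n) : (0 : Fin n) ≠ 1 := by
  rw [Ne, Fin.ext_iff, Fin.val_zero, Fin.val_one', Nat.mod_eq_of_lt hn]
  omega

lemma Fin.revPerm_mul_self {n : ℕ} : (Fin.revPerm : Equiv.Perm (Fin n)) * Fin.revPerm = 1 := by
  ext i
  simp

namespace ZMod

variable {n : ℕ}

lemma sum_ite_val_lt {M : Type*} [AddCommMonoid M] [NeZero n] {m : ℕ} (hm : m ≤ n)
    (f : ZMod n → M) :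
    ∑ x : ZMod n, (if x.val < m then f x else 0) = ∑ t ∈ range m, f t := by
  calc ∑ x : ZMod n, (if x.val < m then f x else 0)
      = ∑ i : Fin n, if (i : ℕ) < m then f (i : ℕ) else 0 := by
        rw [← (Fin.equivZMod n).sum_comp]
        simp [Fin.equivZMod_apply, ZMod.val_natCast, Nat.mod_eq_of_lt]
    _ = ∑ t ∈ range n, if t < m then f t else 0 :=
        Fin.sum_univ_eq_sum_range (fun t => if t < m then f t else 0) n
    _ = ∑ t ∈ range m, f t := by
        rw [← sum_filter]
        congr 1
        ext t
        simp only [mem_filter, mem_range]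
        omega

theorem periodic_of_sum_range_add_eq {M : Type*} [AddCancelCommMonoid M] {m : ℕ}
    {w : ZMod n → M} {s : M} (hw : ∀ c, ∑ t ∈ range m, w (c + t) = s) :
    Function.Periodic w (m : ZMod n) := by
  intro c
  have h := sum_range_succ (fun t => w (c + t)) m
  rw [sum_range_succ', hw c] at h
  simp only [Nat.cast_add, Nat.cast_one, Nat.cast_zero, add_zero, ← add_assoc,
    add_right_comm c _ 1, hw (c + 1)] at h
  exact (add_left_cancel h).symm

theorem apply_eq_apply_zero_of_periodic [NeZero n] {α : Type*} {m : ℕ} {w : ZMod n → α}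
    (hw : Function.Periodic w (m : ZMod n)) (hm : IsUnit (m : ZMod n)) (c : ZMod n) :
    w c = w 0 := by
  obtain ⟨u, hu⟩ := hm
  have hc : (c * ↑u⁻¹).val • (m : ZMod n) = c := by
    rw [nsmul_eq_mul, ZMod.natCast_val, ZMod.cast_id, ← hu, mul_assoc, Units.inv_mul, mul_one]
  simpa [hc] using hw.nsmul (c * ↑u⁻¹).val 0

end ZMod

lemma Nat.two_mul_mod_eq_of_dvd_two_mul {d i : ℕ} (h : d ∣ 2 * i) (hi : ¬ d ∣ i) :
    2 * (i % d) = d := by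
  refine Nat.eq_of_dvd_of_lt_two_mul ?_ ?_ ?_
  · exact mul_ne_zero two_ne_zero fun h0 => hi (Nat.dvd_of_mod_eq_zero h0)
  · rw [← Nat.mul_mod_mul_left]
    exact (Nat.dvd_mod_iff (dvd_mul_left d 2)).2 h
  · have hd : d ≠ 0 := by
      rintro rfl
      exact hi (by simpa using h)
    have := Nat.mod_lt i (Nat.pos_of_ne_zero hd)
    omega

theorem pow_eq_pow_of_sq_eq_one {M : Type*} [Monoid M] {g : M} {i j : ℕ}
    (hi : g ^ i ≠ 1) (hj : g ^ j ≠ 1) (hi2 : (g ^ i) ^ 2 = 1) (hj2 : (g ^ j) ^ 2 = 1) :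
    g ^ i = g ^ j := by
  have half : ∀ k, g ^ k ≠ 1 → (g ^ k) ^ 2 = 1 → 2 * (k % orderOf g) = orderOf g :=
    fun k hk hk2 => Nat.two_mul_mod_eq_of_dvd_two_mul
      (orderOf_dvd_of_pow_eq_one (by rwa [← pow_mul, mul_comm] at hk2))
      (mt orderOf_dvd_iff_pow_eq_one.1 hk)
  have := half i hi hi2
  have := half j hj hj2
  rw [← pow_mod_orderOf, ← pow_mod_orderOf g j]
  congr 1
  omega

theorem not_exists_pow_generator_of_involutions {M : Type*} [Monoid M] {S : Set M} {x y : M}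
    (hx : x ∈ S) (hy : y ∈ S) (hxy : x ≠ y) (hx1 : x ≠ 1) (hy1 : y ≠ 1) (hx2 : x ^ 2 = 1)
    (hy2 : y ^ 2 = 1) : ¬ ∃ g ∈ S, ∀ z ∈ S, ∃ j : ℕ, z = g ^ j := by
  rintro ⟨g, -, hg⟩
  obtain ⟨i, rfl⟩ := hg x hx
  obtain ⟨j, rfl⟩ := hg y hy
  exact hxy (pow_eq_pow_of_sq_eq_one hx1 hy1 hx2 hy2)

section AllOnes

variable {ι : Type*} [Fintype ι]

def allOnes (ι R : Type*) [One R] : Matrix ι ι R :=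
  Matrix.of fun _ _ => 1

lemma allOnes_mul_permMatrix [DecidableEq ι] {R : Type*} [NonAssocSemiring R]
    (σ : Equiv.Perm ι) :
    allOnes ι R * σ.permMatrix R = allOnes ι R := by
  rw [PEquiv.mul_toMatrix_toPEquiv]
  rfl

lemma permMatrix_mul_allOnes [DecidableEq ι] {R : Type*} [NonAssocSemiring R]
    (σ : Equiv.Perm ι) :
    σ.permMatrix R * allOnes ι R = allOnes ι R := by
  rw [PEquiv.toMatrix_toPEquiv_mul]
  rfl

lemma allOnes_mul_allOnes_zmod_two (h : Even (Fintype.card ι)) :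
    allOnes ι (ZMod 2) * allOnes ι (ZMod 2) = 0 := by
  ext i j
  simp [allOnes, Matrix.mul_apply, ZMod.natCast_eq_zero_iff_even.2 h]

lemma sq_allOnes_add_permMatrix_zmod_two [DecidableEq ι] (h : Even (Fintype.card ι))
    {σ : Equiv.Perm ι} (hσ : σ * σ = 1) : (allOnes ι (ZMod 2) + σ.permMatrix (ZMod 2)) ^ 2 = 1 := by
  rw [sq, add_mul, mul_add, mul_add, allOnes_mul_allOnes_zmod_two h, allOnes_mul_permMatrix,
    permMatrix_mul_allOnes, ← permMatrix_mul, hσ, permMatrix_one, zero_add, ← add_assoc,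
    add_eq_right]
  ext i j
  simp [allOnes]
  decide

end AllOnes

section Christoffel

variable {n : ℕ}

def christoffelZMod (n m : ℕ) {R : Type*} (a b : R) : Matrix (ZMod n) (ZMod n) R :=
  Matrix.of fun x y => if (x - m * y).val < m then a else b

lemma christoffel_eq_submatrix [NeZero n] (m : ℕ) {R : Type*} (a b : R) :
    christoffel n m a b =
      (christoffelZMod n m a b).submatrix (Fin.equivZMod n) (Fin.equivZMod n) :=
  rfl

lemma vecMul_christoffelZMod [NeZero n] {R : Type*} [CommRing R] {m : ℕ} (hm : m ≤ n)
    (a b : R) (w : ZMod n → R) (y : ZMod n) :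
    (w ᵥ* christoffelZMod n m a b) y =
      b * ∑ x, w x + (a - b) * ∑ t ∈ range m, w (m * y + t) := by
  have hsplit : ∀ x, w x * christoffelZMod n m a b x y =
      b * w x + (a - b) * (if (x - m * y).val < m then w x else 0) := by
    intro x
    simp only [christoffelZMod, Matrix.of_apply]
    split_ifs <;> ring
  simp only [Matrix.vecMul, dotProduct, hsplit, sum_add_distrib, ← mul_sum]
  congr 2
  rw [← Equiv.sum_comp (Equiv.addRight ((m : ZMod n) * y))]
  simp only [Equiv.coe_addRight, add_sub_cancel_right]
  rw [ZMod.sum_ite_val_lt hm]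
  simp only [add_comm]

theorem isUnit_det_christoffel {K : Type*} [Field K] [NeZero n] {m : ℕ} (hm : m ≤ n)
    (hcop : m.Coprime n) {a b : K} (hab : a ≠ b)
    (hsum : (m : K) * a + ((n - m : ℕ) : K) * b ≠ 0) :
    IsUnit (christoffel n m a b).det := by
  rw [christoffel_eq_submatrix, Matrix.det_submatrix_equiv_self, ← Matrix.isUnit_iff_isUnit_det,
    ← Matrix.vecMul_injective_iff_isUnit]
  refine (injective_iff_map_eq_zero (Matrix.vecMulLinear (christoffelZMod n m a b))).2 ?_
  intro w hw
  obtain ⟨u, hu⟩ : IsUnit (m : ZMod n) := (ZMod.unitOfCoprime m hcop).isUnit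
  have hW : ∀ c : ZMod n, b * ∑ x, w x + (a - b) * ∑ t ∈ range m, w (c + t) = 0 := by
    intro c
    have hc : (m : ZMod n) * (↑u⁻¹ * c) = c := by rw [← hu, ← mul_assoc, Units.mul_inv, one_mul]
    rw [← hc, ← vecMul_christoffelZMod hm]
    exact congrFun hw _
  have hconst : ∀ c, w c = w 0 := ZMod.apply_eq_apply_zero_of_periodic
    (ZMod.periodic_of_sum_range_add_eq fun c =>
      mul_left_cancel₀ (sub_ne_zero.2 hab) (add_left_cancel ((hW c).trans (hW 0).symm)))
    ⟨u, hu⟩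
  have h0 : w 0 * ((m : K) * a + ((n - m : ℕ) : K) * b) = 0 := by
    have h := hW 0
    simp only [hconst, sum_const, card_univ, ZMod.card, card_range, nsmul_eq_mul] at h
    rw [Nat.cast_sub hm]
    linear_combination h
  have hw0 : w 0 = 0 := (mul_eq_zero.1 h0).resolve_right hsum
  funext c
  rw [hconst c, hw0, Pi.zero_apply]

theorem isUnit_det_christoffel_zmod_two [NeZero n] (hne : Even n) {m : ℕ} (hm : m ≤ n)
    (hcop : m.Coprime n) {a b : ZMod 2} (hab : a ≠ b) :
    IsUnit (christoffel n m a b).det := by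
  have hodd : Odd m := (hcop.symm.coprime_dvd_left (even_iff_two_dvd.1 hne)).odd_of_left
  refine isUnit_det_christoffel hm hcop hab ?_
  rw [hodd.natCast_zmod_two, (Nat.Even.sub_odd hm hne hodd).natCast_zmod_two, one_mul, one_mul]
  revert a b
  decide

theorem IsChristoffel.isUnit_det (hne : Even n) {A : Matrix (Fin n) (Fin n) (ZMod 2)}
    (hA : IsChristoffel n A) : IsUnit A.det := by
  obtain ⟨m, a, b, -, hmn, hcop, hab, rfl⟩ := hA
  have : NeZero n := ⟨by omega⟩
  exact isUnit_det_christoffel_zmod_two hne hmn.le hcop hab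

lemma christoffel_apply_zero [NeZero n] (m : ℕ) {R : Type*} (a b : R) (i : Fin n) :
    christoffel n m a b i 0 = if (i : ℕ) < m then a else b := by
  simp [christoffel, ZMod.val_cast_of_lt i.isLt]

lemma christoffel_apply_zero_zero [NeZero n] {m : ℕ} (hm : 0 < m) {R : Type*} (a b : R) :
    christoffel n m a b 0 0 = a := by
  rw [christoffel_apply_zero, Fin.val_zero, if_pos hm]

theorem christoffel_inj [NeZero n] {m m' : ℕ} (hm : 0 < m) (hmn : m < n) (hm' : 0 < m')
    (hm'n : m' < n) {R : Type*} {a b a' b' : R} (hab : a ≠ b)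
    (h : christoffel n m a b = christoffel n m' a' b') : m = m' ∧ a = a' ∧ b = b' := by
  have col (i : ℕ) (hi : i < n) : (if i < m then a else b) = if i < m' then a' else b' := by
    simpa only [christoffel_apply_zero] using congrFun (congrFun h ⟨i, hi⟩) 0
  have ha := col 0 (by omega)
  have hb := col (n - 1) (by omega)
  simp only [hm, hm', if_true, show ¬ n - 1 < m by omega, show ¬ n - 1 < m' by omega,
    if_false] at ha hb
  subst ha hb
  refine ⟨le_antisymm ?_ ?_, rfl, rfl⟩
  · by_contra hlt
    have h := col m' hm'n
    simp only [not_le.1 hlt, lt_irrefl, if_true, if_false] at h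
    exact hab h
  · by_contra hlt
    have h := col m hmn
    simp only [not_le.1 hlt, lt_irrefl, if_true, if_false] at h
    exact hab h.symm

theorem ncard_setOf_isChristoffel {R : Type*} [Fintype R] [DecidableEq R] (hn : 1 < n) :
    {A : Matrix (Fin n) (Fin n) R | IsChristoffel n A}.ncard =
      Nat.totient n * (Fintype.card R * Fintype.card R - Fintype.card R) := by
  have : NeZero n := ⟨by omega⟩
  set T := {m ∈ range n | n.Coprime m} ×ˢ (univ : Finset R).offDiag
  have hT : {A : Matrix (Fin n) (Fin n) R | IsChristoffel n A} =
      ↑(T.image fun p => christoffel n p.1 p.2.1 p.2.2) := by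
    ext A
    simp only [IsChristoffel, Set.mem_ofPred_eq, coe_image, Set.mem_image, mem_coe, T,
      mem_product, mem_filter, mem_range, mem_offDiag, mem_univ, true_and, Prod.exists]
    constructor
    · rintro ⟨m, a, b, -, hmn, hcop, hab, rfl⟩
      exact ⟨m, a, b, ⟨⟨hmn, hcop.symm⟩, hab⟩, rfl⟩
    · rintro ⟨m, a, b, ⟨⟨hmn, hcop⟩, hab⟩, rfl⟩
      have hm : m ≠ 0 := by
        rintro rfl
        exact hn.ne' ((Nat.coprime_zero_right n).1 hcop)
      exact ⟨m, a, b, by omega, hmn, hcop.symm, hab, rfl⟩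
  have hinj : Set.InjOn (fun p : ℕ × R × R => christoffel n p.1 p.2.1 p.2.2) T := by
    rintro ⟨m, a, b⟩ hp ⟨m', a', b'⟩ hq h
    simp only [T, coe_product, Set.mem_prod, coe_filter, Set.mem_ofPred_eq, mem_range,
      coe_offDiag, Set.mem_offDiag] at hp hq
    have hpos : ∀ k, k < n → n.Coprime k → 0 < k := fun k _ hk =>
      Nat.pos_of_ne_zero fun hk0 => hn.ne' ((Nat.coprime_zero_right n).1 (hk0 ▸ hk))
    obtain ⟨rfl, rfl, rfl⟩ := christoffel_inj (hpos m hp.1.1 hp.1.2) hp.1.1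
      (hpos m' hq.1.1 hq.1.2) hq.1.1 hp.2.2.2 h
    rfl
  rw [hT, Set.ncard_coe_finset, card_image_of_injOn hinj, card_product, offDiag_card, card_univ,
    Nat.totient_eq_card_coprime]

lemma christoffel_one [NeZero n] {R : Type*} (a b : R) :
    christoffel n 1 a b = Matrix.of fun i j => if i = j then a else b := by
  ext i j
  simp [christoffel, ZMod.val_eq_zero, sub_eq_zero, Fin.natCast_val_zmod_inj]

lemma christoffel_pred [NeZero n] {R : Type*} (a b : R) :
    christoffel n (n - 1) a b = Matrix.of fun i j => if Fin.rev i = j then b else a := by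
  ext i j
  have hval : (((i : ℕ) : ZMod n) - ((n - 1 : ℕ) : ZMod n) * ((j : ℕ) : ZMod n)).val =
      ((i : ℕ) + j) % n := by
    rw [Nat.cast_pred (NeZero.pos n), ZMod.natCast_self, zero_sub, neg_one_mul, sub_neg_eq_add,
      ← Nat.cast_add, ZMod.val_natCast]
  have hlt : ((i : ℕ) + j) % n < n - 1 ↔ Fin.rev i ≠ j := by
    rw [Ne, Fin.ext_iff, Fin.val_rev]
    rcases lt_or_ge ((i : ℕ) + j) n with h | h
    · rw [Nat.mod_eq_of_lt h]
      omega
    · rw [Nat.mod_eq_sub_mod h, Nat.mod_eq_of_lt (by omega)]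
      omega
  simp only [christoffel, Matrix.of_apply, hval, hlt, ite_not]

lemma christoffel_pred_zero_one [NeZero n] {R : Type*} [Zero R] [One R] :
    christoffel n (n - 1) (0 : R) 1 = Fin.revPerm.permMatrix R := by
  ext i j
  simp [christoffel_pred, PEquiv.toMatrix_apply]

lemma christoffel_one_apply_zero_one [NeZero n] (hn : 1 < n) {R : Type*} (a b : R) :
    christoffel n 1 a b 0 1 = b := by
  rw [christoffel_one, Matrix.of_apply, if_neg (Fin.zero_ne_one_of_one_lt hn)]

lemma christoffel_pred_apply_zero_one [NeZero n] (hn : 2 < n) {R : Type*} (a b : R) :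
    christoffel n (n - 1) a b 0 1 = a := by
  rw [christoffel_pred, Matrix.of_apply, if_neg]
  rw [Fin.ext_iff, Fin.val_rev, Fin.val_zero, Fin.val_one', Nat.mod_eq_of_lt (by omega)]
  omega

lemma christoffel_one_zero_zmod_two (m : ℕ) :
    christoffel n m (1 : ZMod 2) 0 = allOnes (Fin n) (ZMod 2) + christoffel n m 0 1 := by
  ext i j
  simp only [christoffel, allOnes, Matrix.of_apply, Matrix.add_apply]
  split_ifs <;> decide

lemma sq_christoffel_one_zmod_two [NeZero n] (hne : Even n) :
    christoffel n 1 (0 : ZMod 2) 1 ^ 2 = 1 := by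
  have h : christoffel n 1 (0 : ZMod 2) 1 =
      allOnes (Fin n) (ZMod 2) + (1 : Equiv.Perm (Fin n)).permMatrix (ZMod 2) := by
    rw [christoffel_one, permMatrix_one]
    ext i j
    simp only [allOnes, Matrix.of_apply, Matrix.add_apply, Matrix.one_apply]
    split_ifs <;> decide
  rw [h]
  exact sq_allOnes_add_permMatrix_zmod_two (by simpa using hne) (mul_one 1)

lemma sq_christoffel_pred_one_zero_zmod_two [NeZero n] (hne : Even n) :
    christoffel n (n - 1) (1 : ZMod 2) 0 ^ 2 = 1 := by
  rw [christoffel_one_zero_zmod_two, christoffel_pred_zero_one]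
  exact sq_allOnes_add_permMatrix_zmod_two (by simpa using hne) Fin.revPerm_mul_self

lemma sq_christoffel_pred_zero_one [NeZero n] {R : Type*} [Semiring R] :
    christoffel n (n - 1) (0 : R) 1 ^ 2 = 1 := by
  rw [christoffel_pred_zero_one, sq, ← permMatrix_mul, Fin.revPerm_mul_self, permMatrix_one]

theorem christoffel_involutions_ne_zmod_two [NeZero n] (hn : 2 < n) :
    christoffel n 1 (0 : ZMod 2) 1 ≠ christoffel n (n - 1) 1 0 ∧
    christoffel n 1 (0 : ZMod 2) 1 ≠ christoffel n (n - 1) 0 1 ∧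
    christoffel n (n - 1) (1 : ZMod 2) 0 ≠ christoffel n (n - 1) 0 1 ∧
    christoffel n 1 (0 : ZMod 2) 1 ≠ 1 ∧ christoffel n (n - 1) (1 : ZMod 2) 0 ≠ 1 ∧
    christoffel n (n - 1) (0 : ZMod 2) 1 ≠ 1 := by
  have h00₁ := christoffel_apply_zero_zero (n := n) one_pos (0 : ZMod 2) 1
  have h00₂ := christoffel_apply_zero_zero (n := n) (m := n - 1) (by omega) (1 : ZMod 2) 0
  have h00₃ := christoffel_apply_zero_zero (n := n) (m := n - 1) (by omega) (0 : ZMod 2) 1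
  have h01₁ := christoffel_one_apply_zero_one (n := n) (by omega) (0 : ZMod 2) 1
  have h01₂ := christoffel_pred_apply_zero_one hn (1 : ZMod 2) 0
  have h01₃ := christoffel_pred_apply_zero_one hn (0 : ZMod 2) 1
  have h01 := Fin.zero_ne_one_of_one_lt (n := n) (by omega)
  refine ⟨fun h => ?_, fun h => ?_, fun h => ?_, fun h => ?_, fun h => ?_, fun h => ?_⟩
  · simpa [h00₁, h00₂] using congr_fun₂ h 0 0
  · simpa [h01₁, h01₃] using congr_fun₂ h 0 1
  · simpa [h00₂, h00₃] using congr_fun₂ h 0 0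
  · simpa [h00₁] using congr_fun₂ h 0 0
  · simpa [h01₂, h01] using congr_fun₂ h 0 1
  · simpa [h00₃] using congr_fun₂ h 0 0

end Christoffel

theorem christoffel_group_F2_even (n : ℕ) (hn : 2 < n) (hne : Even n) :
    let S : Set (Matrix (Fin n) (Fin n) (ZMod 2)) := {A | IsChristoffel n A ∧ IsUnit A.det}
    S.ncard = 2 * Nat.totient n ∧
    (christoffel n 1 (0 : ZMod 2) 1 ≠ christoffel n (n - 1) (1 : ZMod 2) 0 ∧
      christoffel n 1 (0 : ZMod 2) 1 ≠ christoffel n (n - 1) (0 : ZMod 2) 1 ∧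
      christoffel n (n - 1) (1 : ZMod 2) 0 ≠ christoffel n (n - 1) (0 : ZMod 2) 1) ∧
    (christoffel n 1 (0 : ZMod 2) 1 ≠ 1 ∧ (christoffel n 1 (0 : ZMod 2) 1) ^ 2 = 1) ∧
    (christoffel n (n - 1) (1 : ZMod 2) 0 ≠ 1 ∧ (christoffel n (n - 1) (1 : ZMod 2) 0) ^ 2 = 1) ∧
    (christoffel n (n - 1) (0 : ZMod 2) 1 ≠ 1 ∧ (christoffel n (n - 1) (0 : ZMod 2) 1) ^ 2 = 1) ∧
    ¬ ∃ A ∈ S, ∀ B ∈ S, ∃ j : ℕ, B = A ^ j := by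
  intro S
  have : NeZero n := ⟨by omega⟩
  have hS : S = {A | IsChristoffel n A} :=
    Set.ext fun A => and_iff_left_of_imp (IsChristoffel.isUnit_det hne)
  have hX₁ : IsChristoffel n (christoffel n 1 (0 : ZMod 2) 1) :=
    ⟨1, 0, 1, le_rfl, by omega, Nat.coprime_one_left n, zero_ne_one, rfl⟩
  have hX₂ : IsChristoffel n (christoffel n (n - 1) (1 : ZMod 2) 0) :=
    ⟨n - 1, 1, 0, by omega, by omega,
      (Nat.coprime_self_sub_left (by omega)).2 (Nat.coprime_one_left n), one_ne_zero, rfl⟩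
  obtain ⟨h₁₂, h₁₃, h₂₃, h₁, h₂, h₃⟩ := christoffel_involutions_ne_zmod_two hn
  have hsq₁ := sq_christoffel_one_zmod_two (n := n) hne
  have hsq₂ := sq_christoffel_pred_one_zero_zmod_two (n := n) hne
  refine ⟨?_, ⟨h₁₂, h₁₃, h₂₃⟩, ⟨h₁, hsq₁⟩, ⟨h₂, hsq₂⟩, ⟨h₃, sq_christoffel_pred_zero_one⟩, ?_⟩
  · rw [hS, ncard_setOf_isChristoffel (by omega), ZMod.card]
    ring
  · rw [hS]
    exact not_exists_pow_generator_of_involutions hX₁ hX₂ h₁₂ h₁ h₂ hsq₁ hsq₂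
end
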